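/- arXiv:2307.15396 — 4 statements merged into one kernel-verified Lean document; each statement's English description precedes it below -/
import Mathlib

section
/- Let f* ≡ 0, let the label noise be ε ~ N(0, σ²) for some constant σ > 0, and let D be the corresponding distribution on [0,1]×ℝ (x ~ Uniform([0,1]), y = ε). Let S ~ D^n with n ≥ 2 and let f̂_S be the min-norm interpolator of S. Then for every p ∈ [1,2), the expected population loss is infinite: E_S[ L_p(f̂_S) ] = ∞. -/
open MeasureTheory ProbabilityTheory Filter Set
open scoped ENNReal NNReal

noncomputable section

/-- The uniform distribution on `[0,1]`. -/
def unif : Measure ℝ := volume.restrict (Set.Icc 0 1)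

/-- The `L_p` population loss of a predictor `f` w.r.t. the distribution `D` of
`(x, f*(x) + ε)`, `x ~ Uniform [0,1]`, `ε ~ ν` independent of `x`. -/
def Lp (fstar : ℝ → ℝ) (ν : Measure ℝ) (p : ℝ) (f : ℝ → ℝ) : ℝ≥0∞ :=
  ∫⁻ z : ℝ × ℝ, ENNReal.ofReal (|f z.1 - (fstar z.1 + z.2)| ^ p) ∂(unif.prod ν)

/-- The reconstruction loss `R_p(f) = E_{x ~ Uniform [0,1]} |f(x) - f*(x)|^p`. -/
def Rp (fstar : ℝ → ℝ) (p : ℝ) (f : ℝ → ℝ) : ℝ≥0∞ :=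
  ∫⁻ t, ENNReal.ofReal (|f t - fstar t| ^ p) ∂unif

/-- Distribution of an i.i.d. sample of `n` pairs `(x_i, ε_i)`. -/
def Pn (ν : Measure ℝ) (n : ℕ) : Measure (Fin n → ℝ × ℝ) :=
  Measure.pi fun _ => unif.prod ν

/-- The sample `S = ((x_i, f*(x_i) + ε_i))_{i < n} ~ D^n` built from `((x_i, ε_i))_{i < n}`. -/
def sampleOf (fstar : ℝ → ℝ) {n : ℕ} (ω : Fin n → ℝ × ℝ) : Fin n → ℝ × ℝ :=
  fun i => ((ω i).1, fstar (ω i).1 + (ω i).2)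

/-- A two-layer ReLU network of width `m` with a (unregularized) skip connection. -/
def netFun (m : ℕ) (a w b : Fin m → ℝ) (a₀ b₀ : ℝ) : ℝ → ℝ :=
  fun t => (∑ j, a j * max (w j * t + b j) 0) + a₀ * t + b₀

/-- The squared norm `‖θ‖²` of the (regularized) weights. -/
def normSq (m : ℕ) (a w b : Fin m → ℝ) : ℝ :=
  ∑ j, ((a j) ^ 2 + (w j) ^ 2 + (b j) ^ 2)

/-- `f` interpolates the sample `S`. -/
def Interpolates {n : ℕ} (S : Fin n → ℝ × ℝ) (f : ℝ → ℝ) : Prop :=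
  ∀ i, f (S i).1 = (S i).2

/-- `f` is a minimum-norm interpolating two-layer ReLU network with skip connection. -/
def IsMinNormNet {n : ℕ} (S : Fin n → ℝ × ℝ) (f : ℝ → ℝ) : Prop :=
  ∃ (m : ℕ) (a w b : Fin m → ℝ) (a₀ b₀ : ℝ),
    f = netFun m a w b a₀ b₀ ∧ Interpolates S f ∧
    ∀ (m' : ℕ) (a' w' b' : Fin m' → ℝ) (a₀' b₀' : ℝ),
      Interpolates S (netFun m' a' w' b' a₀' b₀') →
      normSq m a w b ≤ normSq m' a' w' b'

namespace MN

/-- difference quotient -/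
def dq (f : ℝ → ℝ) (u v : ℝ) : ℝ := (f v - f u) / (v - u)

lemma relu_convexOn (w b : ℝ) : ConvexOn ℝ Set.univ (fun x : ℝ => max (w * x + b) 0) := by
  have h1 : ConvexOn ℝ Set.univ (fun x : ℝ => w * x + b) :=
    ((LinearMap.mulLeft ℝ w).convexOn convex_univ).add_const b
  have h2 : ConvexOn ℝ Set.univ (fun _ : ℝ => (0 : ℝ)) := convexOn_const _ convex_univ
  have := h1.sup h2
  exact this

lemma dq_relu_mono (w b : ℝ) {u v z : ℝ} (huv : u < v) (hvz : v < z) :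
    dq (fun x => max (w * x + b) 0) u v ≤ dq (fun x => max (w * x + b) 0) v z :=
  (relu_convexOn w b).slope_mono_adjacent (mem_univ _) (mem_univ _) huv hvz

lemma relu_sub_le {x y : ℝ} (h : x ≤ y) : max y 0 - max x 0 ≤ y - x := by
  have : max y 0 ≤ max x 0 + (y - x) := by
    have h2 : max y 0 ≤ max (x + (y - x)) (0 + (y - x)) :=
      max_le_max (by linarith) (by linarith)
    calc max y 0 ≤ max (x + (y - x)) (0 + (y - x)) := h2
    _ = max x 0 + (y - x) := by rw [max_add_add_right]
  linarith

lemma relu_sub_nonneg {x y : ℝ} (h : x ≤ y) : 0 ≤ max y 0 - max x 0 := by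
  have := max_le_max h (le_refl (0 : ℝ)); linarith

lemma dq_relu_bounds (w b : ℝ) {u v : ℝ} (huv : u < v) :
    min w 0 ≤ dq (fun x => max (w * x + b) 0) u v ∧
      dq (fun x => max (w * x + b) 0) u v ≤ max w 0 := by
  have hdq : dq (fun x => max (w * x + b) 0) u v
      = (max (w * v + b) 0 - max (w * u + b) 0) / (v - u) := rfl
  rw [hdq]
  have hvu : (0:ℝ) < v - u := by linarith
  rcases le_total 0 w with hw | hw
  · have harg : w * u + b ≤ w * v + b := by nlinarith
    have h1 := relu_sub_nonneg harg
    have h2 := relu_sub_le harg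
    constructor
    · rw [min_eq_right hw]
      exact div_nonneg h1 hvu.le
    · rw [max_eq_left hw]
      rw [div_le_iff₀ hvu]
      calc max (w * v + b) 0 - max (w * u + b) 0 ≤ (w * v + b) - (w * u + b) := h2
      _ = w * (v - u) := by ring
  · have harg : w * v + b ≤ w * u + b := by nlinarith
    have h1 := relu_sub_nonneg harg
    have h2 := relu_sub_le harg
    constructor
    · rw [min_eq_left hw]
      rw [le_div_iff₀ hvu]
      have : max (w * u + b) 0 - max (w * v + b) 0 ≤ (w * u + b) - (w * v + b) := h2
      nlinarith
    · rw [max_eq_right hw]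
      apply div_nonpos_of_nonpos_of_nonneg _ hvu.le
      linarith

lemma dq_scale (A : ℝ) (g : ℝ → ℝ) (u v : ℝ) :
    dq (fun x => A * g x) u v = A * dq g u v := by
  unfold dq; simp only []; ring

/-- per-neuron L2 inequality -/
lemma neuron_L2 (A w b : ℝ) {u1 u2 u3 u4 : ℝ} (h12 : u1 < u2) (h23 : u2 < u3) (h34 : u3 < u4) :
    dq (fun x => A * max (w * x + b) 0) u1 u2 - 2 * dq (fun x => A * max (w * x + b) 0) u2 u3
      + dq (fun x => A * max (w * x + b) 0) u3 u4 ≤ |A| * |w| := by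
  set g : ℝ → ℝ := fun x => max (w * x + b) 0 with hg
  rw [dq_scale, dq_scale, dq_scale]
  have m12 := dq_relu_mono w b h12 h23
  have m23 := dq_relu_mono w b h23 h34
  have b1 := dq_relu_bounds w b h12
  have b3 := dq_relu_bounds w b h34
  have habs : max w 0 - min w 0 = |w| := by
    rcases le_total w 0 with h | h
    · rw [max_eq_right h, min_eq_left h, abs_of_nonpos h]; ring
    · rw [max_eq_left h, min_eq_right h, abs_of_nonneg h]; ring
  have key : |dq g u1 u2 - 2 * dq g u2 u3 + dq g u3 u4| ≤ |w| := by
    rw [abs_le]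
    constructor <;> nlinarith [b1.1, b1.2, b3.1, b3.2]
  calc A * dq g u1 u2 - 2 * (A * dq g u2 u3) + A * dq g u3 u4
      = A * (dq g u1 u2 - 2 * dq g u2 u3 + dq g u3 u4) := by ring
  _ ≤ |A * (dq g u1 u2 - 2 * dq g u2 u3 + dq g u3 u4)| := le_abs_self _
  _ = |A| * |dq g u1 u2 - 2 * dq g u2 u3 + dq g u3 u4| := abs_mul _ _
  _ ≤ |A| * |w| := by
      exact mul_le_mul_of_nonneg_left key (abs_nonneg A)

/-- per-neuron L1 inequality -/
lemma neuron_L1 (A w b : ℝ) {u1 u2 u3 : ℝ} (h12 : u1 < u2) (h23 : u2 < u3) :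
    dq (fun x => A * max (w * x + b) 0) u1 u2 - dq (fun x => A * max (w * x + b) 0) u2 u3
      ≤ |A| * |w| := by
  set g : ℝ → ℝ := fun x => max (w * x + b) 0 with hg
  rw [dq_scale, dq_scale]
  have m12 := dq_relu_mono w b h12 h23
  have b1 := dq_relu_bounds w b h12
  have b2 := dq_relu_bounds w b h23
  have habs : max w 0 - min w 0 = |w| := by
    rcases le_total w 0 with h | h
    · rw [max_eq_right h, min_eq_left h, abs_of_nonpos h]; ring
    · rw [max_eq_left h, min_eq_right h, abs_of_nonneg h]; ring
  have key : |dq g u1 u2 - dq g u2 u3| ≤ |w| := by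
    rw [abs_le]; constructor <;> nlinarith [b1.1, b1.2, b2.1, b2.2]
  calc A * dq g u1 u2 - A * dq g u2 u3 = A * (dq g u1 u2 - dq g u2 u3) := by ring
  _ ≤ |A| * |dq g u1 u2 - dq g u2 u3| := by
      rw [← abs_mul]; exact le_abs_self _
  _ ≤ |A| * |w| := mul_le_mul_of_nonneg_left key (abs_nonneg A)


lemma dq_netFun (m : ℕ) (a w b : Fin m → ℝ) (a₀ b₀ : ℝ) {u v : ℝ} (huv : u < v) :
    dq (netFun m a w b a₀ b₀) u v
      = (∑ j, dq (fun x => a j * max (w j * x + b j) 0) u v) + a₀ := by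
  have hne : v - u ≠ 0 := by intro h; apply absurd huv; rw [sub_eq_zero] at h; simp [h]
  have : dq (netFun m a w b a₀ b₀) u v
      = ((∑ j, (a j * max (w j * v + b j) 0 - a j * max (w j * u + b j) 0)) + a₀ * (v - u))
        / (v - u) := by
    unfold dq netFun
    rw [Finset.sum_sub_distrib]
    congr 1
    ring
  rw [this, add_div, Finset.sum_div, mul_div_assoc, div_self hne, mul_one]
  rfl

lemma net_L2 (m : ℕ) (a w b : Fin m → ℝ) (a₀ b₀ : ℝ) {u1 u2 u3 u4 : ℝ}
    (h12 : u1 < u2) (h23 : u2 < u3) (h34 : u3 < u4) :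
    dq (netFun m a w b a₀ b₀) u1 u2 - 2 * dq (netFun m a w b a₀ b₀) u2 u3
      + dq (netFun m a w b a₀ b₀) u3 u4 ≤ normSq m a w b / 2 := by
  rw [dq_netFun m a w b a₀ b₀ h12, dq_netFun m a w b a₀ b₀ h23, dq_netFun m a w b a₀ b₀ h34]
  have step1 : (∑ j, dq (fun x => a j * max (w j * x + b j) 0) u1 u2)
      - 2 * (∑ j, dq (fun x => a j * max (w j * x + b j) 0) u2 u3)
      + (∑ j, dq (fun x => a j * max (w j * x + b j) 0) u3 u4)
      = ∑ j, (dq (fun x => a j * max (w j * x + b j) 0) u1 u2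
          - 2 * dq (fun x => a j * max (w j * x + b j) 0) u2 u3
          + dq (fun x => a j * max (w j * x + b j) 0) u3 u4) := by
    rw [Finset.sum_add_distrib, Finset.sum_sub_distrib, ← Finset.mul_sum]
  have step2 : ∑ j, (dq (fun x => a j * max (w j * x + b j) 0) u1 u2
          - 2 * dq (fun x => a j * max (w j * x + b j) 0) u2 u3
          + dq (fun x => a j * max (w j * x + b j) 0) u3 u4)
      ≤ ∑ j, ((a j) ^ 2 + (w j) ^ 2 + (b j) ^ 2) / 2 := by
    apply Finset.sum_le_sum
    intro j _
    calc dq (fun x => a j * max (w j * x + b j) 0) u1 u2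
          - 2 * dq (fun x => a j * max (w j * x + b j) 0) u2 u3
          + dq (fun x => a j * max (w j * x + b j) 0) u3 u4
        ≤ |a j| * |w j| := neuron_L2 (a j) (w j) (b j) h12 h23 h34
      _ ≤ ((a j) ^ 2 + (w j) ^ 2 + (b j) ^ 2) / 2 := by
          nlinarith [sq_nonneg (|a j| - |w j|), sq_abs (a j), sq_abs (w j), sq_nonneg (b j)]
  calc (∑ j, dq (fun x => a j * max (w j * x + b j) 0) u1 u2) + a₀
        - 2 * ((∑ j, dq (fun x => a j * max (w j * x + b j) 0) u2 u3) + a₀)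
        + ((∑ j, dq (fun x => a j * max (w j * x + b j) 0) u3 u4) + a₀)
      = (∑ j, dq (fun x => a j * max (w j * x + b j) 0) u1 u2)
        - 2 * (∑ j, dq (fun x => a j * max (w j * x + b j) 0) u2 u3)
        + (∑ j, dq (fun x => a j * max (w j * x + b j) 0) u3 u4) := by ring
    _ ≤ ∑ j, ((a j) ^ 2 + (w j) ^ 2 + (b j) ^ 2) / 2 := by rw [step1]; exact step2
    _ = normSq m a w b / 2 := by rw [normSq, Finset.sum_div]

lemma net_L1 (m : ℕ) (a w b : Fin m → ℝ) (a₀ b₀ : ℝ) {u1 u2 u3 : ℝ}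
    (h12 : u1 < u2) (h23 : u2 < u3) :
    dq (netFun m a w b a₀ b₀) u1 u2 - dq (netFun m a w b a₀ b₀) u2 u3
      ≤ normSq m a w b / 2 := by
  rw [dq_netFun m a w b a₀ b₀ h12, dq_netFun m a w b a₀ b₀ h23]
  have step2 : ∑ j, (dq (fun x => a j * max (w j * x + b j) 0) u1 u2
          - dq (fun x => a j * max (w j * x + b j) 0) u2 u3)
      ≤ ∑ j, ((a j) ^ 2 + (w j) ^ 2 + (b j) ^ 2) / 2 := by
    apply Finset.sum_le_sum
    intro j _
    calc dq (fun x => a j * max (w j * x + b j) 0) u1 u2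
          - dq (fun x => a j * max (w j * x + b j) 0) u2 u3
        ≤ |a j| * |w j| := neuron_L1 (a j) (w j) (b j) h12 h23
      _ ≤ ((a j) ^ 2 + (w j) ^ 2 + (b j) ^ 2) / 2 := by
          nlinarith [sq_nonneg (|a j| - |w j|), sq_abs (a j), sq_abs (w j), sq_nonneg (b j)]
  calc (∑ j, dq (fun x => a j * max (w j * x + b j) 0) u1 u2) + a₀
        - ((∑ j, dq (fun x => a j * max (w j * x + b j) 0) u2 u3) + a₀)
      = ∑ j, (dq (fun x => a j * max (w j * x + b j) 0) u1 u2
          - dq (fun x => a j * max (w j * x + b j) 0) u2 u3) := by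
        rw [Finset.sum_sub_distrib]; ring
    _ ≤ ∑ j, ((a j) ^ 2 + (w j) ^ 2 + (b j) ^ 2) / 2 := step2
    _ = normSq m a w b / 2 := by rw [normSq, Finset.sum_div]


/-- data slopes -/
def sl (X Y : ℕ → ℝ) (j : ℕ) : ℝ := (Y (j+1) - Y j) / (X (j+1) - X j)

lemma neuron_eq (κ c t : ℝ) :
    (κ / Real.sqrt |κ|) * max (Real.sqrt |κ| * t + (-(Real.sqrt |κ|) * c)) 0
      = κ * max (t - c) 0 := by
  by_cases hκ : κ = 0
  · simp [hκ]
  · have h0 : (0:ℝ) < |κ| := abs_pos.mpr hκ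
    have hs : Real.sqrt |κ| ≠ 0 := by positivity
    have harg : Real.sqrt |κ| * t + (-(Real.sqrt |κ|) * c) = Real.sqrt |κ| * (t - c) := by ring
    rw [harg]
    rw [show max (Real.sqrt |κ| * (t - c)) 0 = max (Real.sqrt |κ| * (t - c)) (Real.sqrt |κ| * 0)
      by rw [mul_zero]]
    rw [← mul_max_of_nonneg _ _ (Real.sqrt_nonneg |κ|)]
    rw [← mul_assoc, div_mul_cancel₀ _ hs]

lemma spline_exists (N : ℕ) (X Y : ℕ → ℝ)
    (hord : ∀ i j, i < j → j ≤ N + 1 → X i < X j)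
    (hX01 : ∀ i, i ≤ N + 1 → 0 ≤ X i ∧ X i ≤ 1) :
    ∃ (a w b : Fin N → ℝ) (a₀ b₀ : ℝ),
      (∀ i, i ≤ N + 1 → netFun N a w b a₀ b₀ (X i) = Y i) ∧
      normSq N a w b ≤ 3 * ∑ j ∈ Finset.range N, |sl X Y (j+1) - sl X Y j| := by
  set κ : ℕ → ℝ := fun j => sl X Y (j+1) - sl X Y j with hκdef
  refine ⟨fun j => κ j / Real.sqrt |κ j|, fun j => Real.sqrt |κ (j:ℕ)|,
    fun j => -(Real.sqrt |κ (j:ℕ)|) * X ((j:ℕ)+1), sl X Y 0, Y 0 - sl X Y 0 * X 0, ?_, ?_⟩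
  · -- interpolation
    have hform : ∀ t, netFun N (fun j => κ j / Real.sqrt |κ j|) (fun j => Real.sqrt |κ (j:ℕ)|)
        (fun j => -(Real.sqrt |κ (j:ℕ)|) * X ((j:ℕ)+1)) (sl X Y 0) (Y 0 - sl X Y 0 * X 0) t
        = (∑ j ∈ Finset.range N, κ j * max (t - X (j+1)) 0)
          + (sl X Y 0 * t + (Y 0 - sl X Y 0 * X 0)) := by
      intro t
      unfold netFun
      rw [add_assoc]
      congr 1
      rw [← Fin.sum_univ_eq_sum_range (fun j => κ j * max (t - X (j+1)) 0) N]
      apply Finset.sum_congr rfl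
      intro j _
      exact neuron_eq (κ (j:ℕ)) (X ((j:ℕ)+1)) t
    intro i hi
    rw [hform]
    -- induction on i
    clear hform
    induction i with
    | zero =>
      have hz : ∀ j ∈ Finset.range N, κ j * max (X 0 - X (j+1)) 0 = 0 := by
        intro j hj
        rw [Finset.mem_range] at hj
        have : X 0 < X (j+1) := hord 0 (j+1) (Nat.succ_pos j) (by omega)
        rw [max_eq_right (by linarith)]
        ring
      rw [Finset.sum_eq_zero hz]
      ring
    | succ i IH =>
      have hiN : i ≤ N := by omega
      have hIH := IH (by omega)
      have hΔ : X i < X (i+1) := hord i (i+1) (by omega) (by omega)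
      have hΔne : X (i+1) - X i ≠ 0 := by intro h; rw [sub_eq_zero] at h; linarith [h]
      have hsplit : ∀ t : ℝ, ∑ j ∈ Finset.range N, κ j * max (t - X (j+1)) 0
          = (∑ j ∈ Finset.Ico 0 i, κ j * max (t - X (j+1)) 0)
            + ∑ j ∈ Finset.Ico i N, κ j * max (t - X (j+1)) 0 := by
        intro t
        rw [Finset.sum_Ico_consecutive _ (Nat.zero_le i) hiN, Finset.range_eq_Ico]
      have h1 : ∑ j ∈ Finset.Ico i N, κ j * max (X (i+1) - X (j+1)) 0 = 0 := by
        apply Finset.sum_eq_zero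
        intro j hj
        rw [Finset.mem_Ico] at hj
        have : X (i+1) ≤ X (j+1) := by
          rcases Nat.eq_or_lt_of_le hj.1 with h | h
          · rw [h]
          · exact le_of_lt (hord (i+1) (j+1) (by omega) (by omega))
        rw [max_eq_right (by linarith)]
        ring
      have h2 : ∑ j ∈ Finset.Ico i N, κ j * max (X i - X (j+1)) 0 = 0 := by
        apply Finset.sum_eq_zero
        intro j hj
        rw [Finset.mem_Ico] at hj
        have : X i < X (j+1) := hord i (j+1) (by omega) (by omega)
        rw [max_eq_right (by linarith)]
        ring
      have h3 : ∀ t : ℝ, (∀ j, j < i → X (j+1) ≤ t) →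
          ∑ j ∈ Finset.Ico 0 i, κ j * max (t - X (j+1)) 0
            = (∑ j ∈ Finset.Ico 0 i, κ j * t) - ∑ j ∈ Finset.Ico 0 i, κ j * X (j+1) := by
        intro t ht
        rw [← Finset.sum_sub_distrib]
        apply Finset.sum_congr rfl
        intro j hj
        rw [Finset.mem_Ico] at hj
        rw [max_eq_left (by linarith [ht j hj.2])]
        ring
      have hXle : ∀ j, j < i → X (j+1) ≤ X i := by
        intro j hj
        rcases Nat.eq_or_lt_of_le (Nat.succ_le_of_lt hj) with h | h
        · exact le_of_eq (congrArg X h)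
        · exact le_of_lt (hord (j+1) i h (by omega))
      have hXle' : ∀ j, j < i → X (j+1) ≤ X (i+1) := by
        intro j hj; exact le_trans (hXle j hj) (le_of_lt hΔ)
      have htel : ∑ j ∈ Finset.Ico 0 i, κ j = sl X Y i - sl X Y 0 := by
        rw [← Finset.range_eq_Ico]
        exact Finset.sum_range_sub (sl X Y) i
      have hslmul : sl X Y i * (X (i+1) - X i) = Y (i+1) - Y i := by
        unfold sl
        rw [div_mul_cancel₀ _ hΔne]
      rw [hsplit, h1, h3 _ hXle', add_zero]
      rw [hsplit, h2, h3 _ hXle, add_zero] at hIH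
      have expand : ∀ c : ℝ, (∑ j ∈ Finset.Ico 0 i, κ j * c) = (sl X Y i - sl X Y 0) * c := by
        intro c
        rw [← Finset.sum_mul, htel]
      rw [expand] at hIH ⊢
      nlinarith [hIH, hslmul]
  · -- norm bound
    unfold normSq
    rw [Finset.mul_sum,
      ← Fin.sum_univ_eq_sum_range (fun j => 3 * |sl X Y (j+1) - sl X Y j|) N]
    apply Finset.sum_le_sum
    intro j _
    have ha2 : (κ (j:ℕ) / Real.sqrt |κ (j:ℕ)|) ^ 2 = |κ (j:ℕ)| := by
      by_cases h : κ (j:ℕ) = 0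
      · simp [h]
      · have h0 : (0:ℝ) < |κ (j:ℕ)| := abs_pos.mpr h
        rw [div_pow, Real.sq_sqrt (abs_nonneg _), ← sq_abs]
        field_simp
    have hw2 : (Real.sqrt |κ (j:ℕ)|) ^ 2 = |κ (j:ℕ)| := Real.sq_sqrt (abs_nonneg _)
    have hb2 : (-(Real.sqrt |κ (j:ℕ)|) * X ((j:ℕ)+1)) ^ 2 = |κ (j:ℕ)| * X ((j:ℕ)+1) ^ 2 := by
      rw [mul_pow, neg_pow, hw2]  -- check
      ring_nf
    have hX := hX01 ((j:ℕ)+1) (by omega)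
    have hXsq : X ((j:ℕ)+1) ^ 2 ≤ 1 := by nlinarith [hX.1, hX.2]
    rw [ha2, hw2]
    have hgoal : |κ (j:ℕ)| + |κ (j:ℕ)| + (-(Real.sqrt |κ (j:ℕ)|) * X ((j:ℕ)+1)) ^ 2
        ≤ 3 * |κ (j:ℕ)| := by
      rw [hb2]
      nlinarith [abs_nonneg (κ (j:ℕ))]
    exact hgoal


set_option maxHeartbeats 1000000 in
lemma key (N : ℕ) (m : ℕ) (hm : N + 6 ≤ m)
    (S : Fin (N+2) → ℝ × ℝ) (f : ℝ → ℝ) (hf : IsMinNormNet S f)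
    (hord : ∀ i j : Fin (N+2), (i:ℕ) < (j:ℕ) → (S i).1 < (S j).1)
    (hgapLB : ∀ i j : Fin (N+2), 1 ≤ (i:ℕ) → (i:ℕ) < (j:ℕ) →
      1/(8*((N:ℝ)+2)) ≤ (S j).1 - (S i).1)
    (hx01 : ∀ i, 0 ≤ (S i).1 ∧ (S i).1 ≤ 1)
    (hy2 : ∀ i, |(S i).2| ≤ 2)
    (hx0l : 1/4 < (S ⟨0, by omega⟩).1)
    (hy0 : 1 < (S ⟨0, by omega⟩).2) (hy1 : (S ⟨1, by omega⟩).2 < -1)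
    (hgap : (S ⟨1, by omega⟩).1 - (S ⟨0, by omega⟩).1 ≤ ((12:ℝ)^m)⁻¹) :
    ∀ t, 0 ≤ t → t ≤ 1/8 → 1 + (12:ℝ)^m/16 ≤ f t := by
  intro t ht0 ht8
  set X : ℕ → ℝ := fun i => (S ⟨min i (N+1), by omega⟩).1 with hXdef
  set Y : ℕ → ℝ := fun i => (S ⟨min i (N+1), by omega⟩).2 with hYdef
  have hXS : ∀ i : Fin (N+2), X (i:ℕ) = (S i).1 := by
    intro i
    have : (⟨min (i:ℕ) (N+1), by omega⟩ : Fin (N+2)) = i := by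
      apply Fin.ext
      simp only []
      exact min_eq_left (by omega)
    rw [hXdef]
    simp only []
    rw [this]
  have hYS : ∀ i : Fin (N+2), Y (i:ℕ) = (S i).2 := by
    intro i
    have : (⟨min (i:ℕ) (N+1), by omega⟩ : Fin (N+2)) = i := by
      apply Fin.ext; simp only []; exact min_eq_left (by omega)
    rw [hYdef]; simp only []; rw [this]
  have hXnat : ∀ i : ℕ, ∀ hi : i ≤ N+1, X i = (S ⟨i, by omega⟩).1 := by
    intro i hi
    rw [hXdef]; simp only []
    have heq : (⟨min i (N+1), by omega⟩ : Fin (N+2)) = ⟨i, by omega⟩ := by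
      apply Fin.ext; simp only []; exact min_eq_left hi
    rw [heq]
  have hYnat : ∀ i : ℕ, ∀ hi : i ≤ N+1, Y i = (S ⟨i, by omega⟩).2 := by
    intro i hi
    rw [hYdef]; simp only []
    have heq : (⟨min i (N+1), by omega⟩ : Fin (N+2)) = ⟨i, by omega⟩ := by
      apply Fin.ext; simp only []; exact min_eq_left hi
    rw [heq]
  have hordX : ∀ i j, i < j → j ≤ N + 1 → X i < X j := by
    intro i j hij hj
    rw [hXnat i (by omega), hXnat j hj]
    exact hord _ _ (by simpa using hij)
  have hX01' : ∀ i, i ≤ N + 1 → 0 ≤ X i ∧ X i ≤ 1 := by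
    intro i hi
    rw [hXnat i hi]
    exact hx01 _
  -- competitor spline
  obtain ⟨a', w', b', a₀', b₀', hinterp', hnorm'⟩ := spline_exists N X Y hordX hX01'
  obtain ⟨mf, a, w, b, a₀, b₀, hfeq, hinterp, hmin⟩ := hf
  have hcomp : Interpolates S (netFun N a' w' b' a₀' b₀') := by
    intro i
    rw [← hXS i, ← hYS i]
    exact hinterp' (i:ℕ) (by omega)
  have hNormf : normSq mf a w b ≤ 3 * ∑ j ∈ Finset.range N, |sl X Y (j+1) - sl X Y j| :=
    le_trans (hmin N a' w' b' a₀' b₀' hcomp) hnorm'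
  -- slope bounds
  have hn2 : (0:ℝ) < (N:ℝ) + 2 := by positivity
  have hslb : ∀ j, 1 ≤ j → j ≤ N → |sl X Y j| ≤ 32*((N:ℝ)+2) := by
    intro j h1 h2
    have hgapj : 1/(8*((N:ℝ)+2)) ≤ X (j+1) - X j := by
      rw [hXnat (j+1) (by omega), hXnat j (by omega)]
      exact hgapLB _ _ (by simpa using h1) (by simp)
    have hgappos : (0:ℝ) < X (j+1) - X j := by
      have : (0:ℝ) < 1/(8*((N:ℝ)+2)) := by positivity
      linarith
    have hYb : |Y (j+1) - Y j| ≤ 4 := by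
      rw [hYnat (j+1) (by omega), hYnat j (by omega)]
      have := hy2 (⟨j+1, by omega⟩ : Fin (N+2))
      have := hy2 (⟨j, by omega⟩ : Fin (N+2))
      rw [abs_le] at *
      constructor <;> linarith [abs_le.mp (hy2 (⟨j+1, by omega⟩ : Fin (N+2))),
        abs_le.mp (hy2 (⟨j, by omega⟩ : Fin (N+2)))]
    unfold sl
    rw [abs_div, abs_of_pos hgappos, div_le_iff₀ hgappos]
    calc |Y (j+1) - Y j| ≤ 4 := hYb
    _ = 32*((N:ℝ)+2) * (1/(8*((N:ℝ)+2))) := by field_simp; ring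
    _ ≤ 32*((N:ℝ)+2) * (X (j+1) - X j) := by
        apply mul_le_mul_of_nonneg_left hgapj (by positivity)
  have hsumb : ∑ j ∈ Finset.range N, |sl X Y (j+1) - sl X Y j|
      ≤ |sl X Y 0| + 32*((N:ℝ)+2) + (N:ℝ) * (64*((N:ℝ)+2)) := by
    rcases Nat.eq_zero_or_pos N with hN | hN
    · subst hN
      simp
      positivity
    · obtain ⟨N', rfl⟩ : ∃ N', N = N' + 1 := ⟨N - 1, by omega⟩
      rw [Finset.sum_range_succ']
      have hterm0 : |sl X Y 1 - sl X Y 0| ≤ 32*((N':ℝ)+1+2) + |sl X Y 0| := by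
        have h1 := hslb 1 (by omega) (by omega)
        calc |sl X Y 1 - sl X Y 0| ≤ |sl X Y 1| + |sl X Y 0| := abs_sub _ _
        _ ≤ 32*((N':ℝ)+1+2) + |sl X Y 0| := by
            push_cast at h1 ⊢
            linarith
      have hrest : ∑ j ∈ Finset.range N', |sl X Y (j+1+1) - sl X Y (j+1)|
          ≤ (N':ℝ) * (64*((N':ℝ)+1+2)) := by
        calc ∑ j ∈ Finset.range N', |sl X Y (j+1+1) - sl X Y (j+1)|
            ≤ ∑ _j ∈ Finset.range N', 64*((N':ℝ)+1+2) := by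
              apply Finset.sum_le_sum
              intro j hj
              rw [Finset.mem_range] at hj
              have h1 := hslb (j+2) (by omega) (by omega)
              have h2 := hslb (j+1) (by omega) (by omega)
              push_cast at h1 h2 ⊢
              calc |sl X Y (j+1+1) - sl X Y (j+1)|
                  ≤ |sl X Y (j+1+1)| + |sl X Y (j+1)| := abs_sub _ _
              _ ≤ 64*((N':ℝ)+1+2) := by
                  have : (j+1+1 : ℕ) = j + 2 := by omega
                  rw [this]
                  linarith
        _ = (N':ℝ) * (64*((N':ℝ)+1+2)) := by
            rw [Finset.sum_const, Finset.card_range]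
            simp [nsmul_eq_mul]
      push_cast
      push_cast at hterm0 hrest
      linarith
  -- the steep slope
  set s : ℝ := sl X Y 0 with hsdef
  have hgap0 : (0:ℝ) < X 1 - X 0 := by
    have := hordX 0 1 (by omega) (by omega); linarith
  have hY10 : Y 1 - Y 0 ≤ -2 := by
    rw [hYnat 1 (by omega), hYnat 0 (by omega)]
    linarith
  have h12m : (0:ℝ) < (12:ℝ)^m := by positivity
  have hgapU : X 1 - X 0 ≤ ((12:ℝ)^m)⁻¹ := by
    rw [hXnat 1 (by omega), hXnat 0 (by omega)]
    exact hgap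
  have hs_neg : s ≤ -2 * (12:ℝ)^m := by
    rw [hsdef]
    unfold sl
    rw [div_le_iff₀ hgap0]
    calc Y (0+1) - Y 0 ≤ -2 := hY10
    _ ≤ -2 * (12:ℝ)^m * (X (0+1) - X 0) := by
        have h1 : (12:ℝ)^m * (X 1 - X 0) ≤ 1 := by
          calc (12:ℝ)^m * (X 1 - X 0) ≤ (12:ℝ)^m * ((12:ℝ)^m)⁻¹ :=
            mul_le_mul_of_nonneg_left hgapU h12m.le
          _ = 1 := mul_inv_cancel₀ (ne_of_gt h12m)
        nlinarith
  -- dq facts from interpolation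
  have hfX0 : f (X 0) = Y 0 := by
    rw [hXnat 0 (by omega), hYnat 0 (by omega)]; exact hinterp _
  have hfX1 : f (X 1) = Y 1 := by
    rw [hXnat 1 (by omega), hYnat 1 (by omega)]; exact hinterp _
  have hdq01 : dq f (X 0) (X 1) = s := by
    rw [hsdef]; unfold dq sl
    rw [hfX0, hfX1]
  have htX0 : t < X 0 := by
    have : (1:ℝ)/4 < X 0 := by rw [hXnat 0 (by omega)]; exact hx0l
    linarith
  -- growth bound on (N:ℝ)
  have hNR : 400*((N:ℝ)+2)^2 ≤ (12:ℝ)^m := by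
    have h1 : ((N:ℕ)+2)^2 ≤ 12^(N+2) := by
      have h2 : (N+2) < 2^(N+2) := Nat.lt_two_pow_self
      have h3 : (N+2)^2 < (2^(N+2))^2 := by
        exact Nat.pow_lt_pow_left h2 (by omega)
      have h4 : (2^(N+2))^2 = 4^(N+2) := by
        rw [← pow_mul, mul_comm, pow_mul]
        norm_num
      have h5 : 4^(N+2) ≤ 12^(N+2) := Nat.pow_le_pow_left (by omega) _
      omega
    have h1R : ((N:ℝ)+2)^2 ≤ (12:ℝ)^(N+2) := by exact_mod_cast h1
    calc 400*((N:ℝ)+2)^2 ≤ 400 * (12:ℝ)^(N+2) := by nlinarith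
    _ ≤ (12:ℝ)^3 * (12:ℝ)^(N+2) := by
        nlinarith [pow_pos (show (0:ℝ) < 12 by norm_num) (N+2)]
    _ = (12:ℝ)^(N+5) := by rw [← pow_add]; congr 1; omega
    _ ≤ (12:ℝ)^m := by
        apply pow_le_pow_right₀ (by norm_num)
        omega
  -- main slope bound on f to the left
  have habs_s : |s| = -s := abs_of_neg (by linarith)
  have hmain : dq f t (X 0) ≤ -(12:ℝ)^m/2 := by
    rcases Nat.eq_zero_or_pos N with hN | hN
    · -- N = 0 : norm is zero, use L1
      have hnorm0 : normSq mf a w b ≤ 0 := by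
        rw [hN] at hNormf
        simpa using hNormf
      have hL1 : dq f t (X 0) - dq f (X 0) (X 1) ≤ normSq mf a w b / 2 := by
        rw [hfeq]
        exact net_L1 mf a w b a₀ b₀ htX0 (by linarith [hgap0])
      rw [hdq01] at hL1
      linarith
    · -- N ≥ 1 : use L2 with third point
      have hfX2 : f (X 2) = Y 2 := by
        rw [hXnat 2 (by omega), hYnat 2 (by omega)]; exact hinterp _
      have hgap12 : (0:ℝ) < X 2 - X 1 := by
        have := hordX 1 2 (by omega) (by omega); linarith
      have hdq12 : dq f (X 1) (X 2) = sl X Y 1 := by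
        unfold dq sl
        rw [hfX1, hfX2]
      have hL2 : dq f t (X 0) - 2 * dq f (X 0) (X 1) + dq f (X 1) (X 2)
          ≤ normSq mf a w b / 2 := by
        rw [hfeq]
        exact net_L2 mf a w b a₀ b₀ htX0 (by linarith [hgap0]) (by linarith [hgap12])
      rw [hdq01, hdq12] at hL2
      have hsl1 : |sl X Y 1| ≤ 32*((N:ℝ)+2) := hslb 1 (by omega) (by omega)
      have hNcast : (1:ℝ) ≤ (N:ℝ) := by exact_mod_cast hN
      have hNormf2 : normSq mf a w b ≤ 3 * (-s) + 3*(32*((N:ℝ)+2) + (N:ℝ)*(64*((N:ℝ)+2))) := by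
        calc normSq mf a w b ≤ 3 * ∑ j ∈ Finset.range N, |sl X Y (j+1) - sl X Y j| := hNormf
        _ ≤ 3 * (|s| + 32*((N:ℝ)+2) + (N:ℝ)*(64*((N:ℝ)+2))) := by
            rw [hsdef]
            nlinarith [hsumb]
        _ = 3 * (-s) + 3*(32*((N:ℝ)+2) + (N:ℝ)*(64*((N:ℝ)+2))) := by rw [habs_s]; ring
      have hD : 32*((N:ℝ)+2) + (3*(32*((N:ℝ)+2) + (N:ℝ)*(64*((N:ℝ)+2))))/2 + 32*((N:ℝ)+2)
          ≤ 200*((N:ℝ)+2)^2 := by nlinarith [hNcast, sq_nonneg ((N:ℝ)+2)]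
      have hend : dq f t (X 0) ≤ s/2 + 200*((N:ℝ)+2)^2 := by
        have hs2 := abs_le.mp hsl1
        linarith [hL2, hNormf2, hs2.1, hs2.2, hD]
      have hfin : s/2 + 200*((N:ℝ)+2)^2 ≤ -(12:ℝ)^m/2 := by linarith [hs_neg, hNR]
      linarith
  -- conclude
  have hX0t : (1:ℝ)/8 ≤ X 0 - t := by
    have : (1:ℝ)/4 < X 0 := by rw [hXnat 0 (by omega)]; exact hx0l
    linarith
  have hdqval : f t = f (X 0) - (X 0 - t) * dq f t (X 0) := by
    unfold dq
    field_simp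
    ring
  have hY0 : 1 < Y 0 := by rw [hYnat 0 (by omega)]; exact hy0
  rw [hdqval, hfX0]
  have hXub : X 0 - t ≤ 1 := by
    have h := (hX01' 0 (by omega)).2
    linarith
  have hprod : (X 0 - t) * dq f t (X 0) ≤ -(12:ℝ)^m/16 := by
    have h1 : (X 0 - t) * dq f t (X 0) ≤ (X 0 - t) * (-(12:ℝ)^m/2) :=
      mul_le_mul_of_nonneg_left hmain (by linarith)
    nlinarith [h1, hX0t, h12m]
  linarith


/-- grid width -/
def delta (m : ℕ) : ℝ := ((12:ℝ)^m)⁻¹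

/-- gap for upper points -/
def gg (n : ℕ) : ℝ := 1/(8*(n:ℝ))

/-- the cell of coordinate `i` in event `(m,k)` -/
def cell (n m k : ℕ) (i : Fin n) : Set (ℝ × ℝ) :=
  if (i:ℕ) = 0 then
    Ioo (1/4 + k*delta m) (1/4 + k*delta m + delta m/3) ×ˢ Ioo 1 2
  else if (i:ℕ) = 1 then
    Ioo (1/4 + k*delta m + 2*delta m/3) (1/4 + k*delta m + delta m) ×ˢ Ioo (-2) (-1)
  else
    Ioo (5/8 + ((2*((i:ℕ)-2) : ℕ) : ℝ)*gg n) (5/8 + (((2*((i:ℕ)-2) : ℕ) : ℝ)+1)*gg n)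
      ×ˢ Ioo 0 1

set_option maxHeartbeats 1000000 in
lemma event_big {N m k : ℕ} (hm : N + 6 ≤ m)
    (hk : ((k:ℝ)+1) * delta m ≤ 1/4)
    (ω : Fin (N+2) → ℝ × ℝ) (hω : ∀ i, ω i ∈ cell (N+2) m k i)
    (f : ℝ → ℝ) (hf : IsMinNormNet (sampleOf (fun _ => 0) ω) f) :
    ∀ t, 0 ≤ t → t ≤ 1/8 → 1 + (12:ℝ)^m/16 ≤ f t := by
  have hS1 : ∀ i, ((sampleOf (fun _ => 0) ω) i).1 = (ω i).1 := fun i => rfl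
  have hS2 : ∀ i, ((sampleOf (fun _ => 0) ω) i).2 = (ω i).2 := by
    intro i; unfold sampleOf; simp
  have hδ : 0 < delta m := by unfold delta; positivity
  have hNR : (0:ℝ) < (N:ℝ) + 2 := by positivity
  have hgpos : 0 < gg (N+2) := by
    unfold gg; positivity
  have hgval : gg (N+2) = 1/(8*((N:ℝ)+2)) := by
    unfold gg; push_cast; ring_nf
  have hg16 : gg (N+2) ≤ 1/16 := by
    rw [hgval]
    rw [div_le_div_iff₀ (by positivity) (by norm_num)]
    nlinarith
  have hkδ : (0:ℝ) ≤ (k:ℝ) * delta m := by positivity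
  have hkδ1 : (k:ℝ) * delta m + delta m ≤ 1/4 := by nlinarith
  -- coordinate facts
  have hc0 : (ω ⟨0, by omega⟩).1 ∈ Ioo (1/4 + k*delta m) (1/4 + k*delta m + delta m/3)
      ∧ (ω ⟨0, by omega⟩).2 ∈ Ioo (1:ℝ) 2 := by
    have h := hω ⟨0, by omega⟩
    rw [cell, if_pos rfl] at h
    exact h
  have hc1 : (ω ⟨1, by omega⟩).1 ∈ Ioo (1/4 + k*delta m + 2*delta m/3) (1/4 + k*delta m + delta m)
      ∧ (ω ⟨1, by omega⟩).2 ∈ Ioo (-2:ℝ) (-1) := by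
    have h := hω ⟨1, by omega⟩
    rw [cell, if_neg (by simp), if_pos rfl] at h
    exact h
  have hcmid : ∀ i : Fin (N+2), 2 ≤ (i:ℕ) →
      (ω i).1 ∈ Ioo (5/8 + ((2*((i:ℕ)-2) : ℕ) : ℝ)*gg (N+2))
        (5/8 + (((2*((i:ℕ)-2) : ℕ) : ℝ)+1)*gg (N+2))
      ∧ (ω i).2 ∈ Ioo (0:ℝ) 1 := by
    intro i hi
    have h := hω i
    rw [cell, if_neg (by omega), if_neg (by omega)] at h
    exact h
  -- bounds for mid coordinates
  have hmidlb : ∀ i : Fin (N+2), 2 ≤ (i:ℕ) → 5/8 < (ω i).1 := by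
    intro i hi
    have h := (hcmid i hi).1.1
    have : (0:ℝ) ≤ ((2*((i:ℕ)-2) : ℕ) : ℝ)*gg (N+2) := by positivity
    linarith
  have hmidub : ∀ i : Fin (N+2), 2 ≤ (i:ℕ) → (ω i).1 < 7/8 := by
    intro i hi
    have h := (hcmid i hi).1.2
    have hle : ((2*((i:ℕ)-2) : ℕ) : ℝ) + 1 ≤ ((2*(N+2) : ℕ) : ℝ) := by
      have : (2*((i:ℕ)-2) : ℕ) + 1 ≤ (2*(N+2) : ℕ) := by omega
      exact_mod_cast this
    have h2 : (((2*((i:ℕ)-2) : ℕ) : ℝ)+1)*gg (N+2) ≤ ((2*(N+2) : ℕ):ℝ) * gg (N+2) :=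
      mul_le_mul_of_nonneg_right hle hgpos.le
    have h3 : ((2*(N+2) : ℕ):ℝ) * gg (N+2) = 1/4 := by
      rw [hgval]
      push_cast
      field_simp
      ring
    linarith
  have hx0ub : (ω ⟨0, by omega⟩).1 < 1/2 := by
    have h := hc0.1.2
    linarith
  have hx1ub : (ω ⟨1, by omega⟩).1 < 1/2 := by
    have h := hc1.1.2
    linarith
  have hx0lb : 1/4 < (ω ⟨0, by omega⟩).1 := by
    have h := hc0.1.1
    linarith
  have hx1lb : 1/4 < (ω ⟨1, by omega⟩).1 := by
    have h := hc1.1.1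
    have : (0:ℝ) < 2*delta m/3 := by positivity
    linarith
  -- fin index normalization: any i with val 0 equals ⟨0,_⟩
  have hfin : ∀ (i : Fin (N+2)) (v : ℕ) (h : (i:ℕ) = v), i = ⟨v, by omega⟩ := by
    intro i v h; apply Fin.ext; simp [h]
  apply key N m hm (sampleOf (fun _ => 0) ω) f hf
  · -- hord
    intro i j hij
    rw [hS1, hS1]
    rcases Nat.eq_zero_or_pos (i:ℕ) with hi0 | hip
    · rw [hfin i 0 hi0]
      rcases Nat.lt_or_ge (j:ℕ) 2 with hj2 | hj2
      · have hj1 : (j:ℕ) = 1 := by omega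
        rw [hfin j 1 hj1]
        have h1 := hc0.1.2
        have h2 := hc1.1.1
        have : (0:ℝ) < delta m/3 := by positivity
        linarith
      · have := hmidlb j hj2
        linarith [hx0ub]
    · rcases Nat.lt_or_ge (i:ℕ) 2 with hi2 | hi2
      · have hi1 : (i:ℕ) = 1 := by omega
        rw [hfin i 1 hi1]
        have hj2 : 2 ≤ (j:ℕ) := by omega
        have := hmidlb j hj2
        linarith [hx1ub]
      · have hj2 : 2 ≤ (j:ℕ) := by omega
        have h1 := (hcmid i hi2).1.2
        have h2 := (hcmid j hj2).1.1
        have hle : ((2*((i:ℕ)-2) : ℕ) : ℝ) + 1 ≤ ((2*((j:ℕ)-2) : ℕ) : ℝ) := by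
          have : (2*((i:ℕ)-2) : ℕ) + 1 ≤ (2*((j:ℕ)-2) : ℕ) := by omega
          exact_mod_cast this
        have h3 : (((2*((i:ℕ)-2) : ℕ) : ℝ)+1)*gg (N+2) ≤ ((2*((j:ℕ)-2) : ℕ):ℝ) * gg (N+2) :=
          mul_le_mul_of_nonneg_right hle hgpos.le
        linarith
  · -- hgapLB
    intro i j hi1 hij
    rw [hS1, hS1, ← hgval]
    rcases Nat.lt_or_ge (i:ℕ) 2 with hi2 | hi2
    · have hieq : (i:ℕ) = 1 := by omega
      rw [hfin i 1 hieq]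
      have hj2 : 2 ≤ (j:ℕ) := by omega
      have := hmidlb j hj2
      have := hx1ub
      linarith [hg16]
    · have hj2 : 2 ≤ (j:ℕ) := by omega
      have h1 := (hcmid i hi2).1.2
      have h2 := (hcmid j hj2).1.1
      have hle : ((2*((i:ℕ)-2) : ℕ) : ℝ) + 1 + 1 ≤ ((2*((j:ℕ)-2) : ℕ) : ℝ) := by
        have : (2*((i:ℕ)-2) : ℕ) + 1 + 1 ≤ (2*((j:ℕ)-2) : ℕ) := by omega
        exact_mod_cast this
      have h3 : (((2*((i:ℕ)-2) : ℕ) : ℝ)+2)*gg (N+2) ≤ ((2*((j:ℕ)-2) : ℕ):ℝ) * gg (N+2) := by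
        apply mul_le_mul_of_nonneg_right _ hgpos.le
        linarith
      nlinarith [hgpos]
  · -- hx01
    intro i
    rw [hS1]
    rcases Nat.eq_zero_or_pos (i:ℕ) with hi0 | hip
    · rw [hfin i 0 hi0]
      constructor <;> linarith [hx0lb, hx0ub]
    · rcases Nat.lt_or_ge (i:ℕ) 2 with hi2 | hi2
      · have hi1 : (i:ℕ) = 1 := by omega
        rw [hfin i 1 hi1]
        constructor <;> linarith [hx1lb, hx1ub]
      · constructor <;> linarith [hmidlb i hi2, hmidub i hi2]
  · -- hy2
    intro i
    rw [hS2]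
    rw [abs_le]
    rcases Nat.eq_zero_or_pos (i:ℕ) with hi0 | hip
    · rw [hfin i 0 hi0]
      have h1 := hc0.2.1
      have h2 := hc0.2.2
      constructor <;> linarith
    · rcases Nat.lt_or_ge (i:ℕ) 2 with hi2 | hi2
      · have hi1 : (i:ℕ) = 1 := by omega
        rw [hfin i 1 hi1]
        have h1 := hc1.2.1
        have h2 := hc1.2.2
        constructor <;> linarith
      · have h1 := (hcmid i hi2).2.1
        have h2 := (hcmid i hi2).2.2
        constructor <;> linarith
  · -- hx0l
    rw [hS1]
    exact hx0lb
  · -- hy0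
    rw [hS2]
    exact hc0.2.1
  · -- hy1
    rw [hS2]
    exact hc1.2.2
  · -- hgap
    rw [hS1, hS1]
    have h1 := hc1.1.2
    have h2 := hc0.1.1
    have : (ω ⟨1, by omega⟩).1 - (ω ⟨0, by omega⟩).1 ≤ delta m := by linarith
    unfold delta at this
    exact this


lemma unif_Ioo {α β : ℝ} (h0 : 0 ≤ α) (h1 : β ≤ 1) :
    unif (Set.Ioo α β) = ENNReal.ofReal (β - α) := by
  rw [unif, Measure.restrict_apply measurableSet_Ioo]
  rw [Set.inter_eq_left.mpr]
  · exact Real.volume_Ioo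
  · intro x hx
    exact ⟨le_of_lt (lt_of_le_of_lt h0 hx.1), le_trans (le_of_lt hx.2) h1⟩

lemma gauss_Ioo_ne_zero {v : ℝ≥0} (hv : v ≠ 0) {α β : ℝ} (hab : α < β) :
    gaussianReal 0 v (Set.Ioo α β) ≠ 0 := by
  rw [gaussianReal_apply 0 hv]
  have hpos : 0 < ∫⁻ x in Set.Ioo α β, gaussianPDF 0 v x := by
    rw [setLIntegral_pos_iff (measurable_gaussianPDF 0 v)]
    have hsupp : Function.support (gaussianPDF 0 v) = Set.univ := by
      ext x
      simp [Function.mem_support, (gaussianPDF_pos 0 hv x).ne']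
    rw [hsupp, Set.univ_inter, Real.volume_Ioo]
    simp [sub_pos, hab]
  exact hpos.ne'

instance : SigmaFinite unif :=
  inferInstanceAs (SigmaFinite (volume.restrict (Set.Icc 0 1)))

lemma cell_measurable (n m k : ℕ) (i : Fin n) : MeasurableSet (cell n m k i) := by
  unfold cell
  split_ifs <;> exact measurableSet_Ioo.prod measurableSet_Ioo

set_option maxHeartbeats 1000000 in
lemma event_prob (v : ℝ≥0) (N m k : ℕ) (hk : ((k:ℝ)+1) * delta m ≤ 1/4) :
    Pn (gaussianReal 0 v) (N+2) (Set.pi Set.univ (cell (N+2) m k))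
      = (ENNReal.ofReal (delta m/3) * gaussianReal 0 v (Set.Ioo 1 2))
        * ((ENNReal.ofReal (delta m/3) * gaussianReal 0 v (Set.Ioo (-2) (-1)))
        * (ENNReal.ofReal (gg (N+2)) * gaussianReal 0 v (Set.Ioo 0 1))^N) := by
  have hδ : 0 < delta m := by unfold delta; positivity
  have hkδ : (0:ℝ) ≤ (k:ℝ) * delta m := by positivity
  have hkδ1 : (k:ℝ) * delta m + delta m ≤ 1/4 := by nlinarith
  have hNR : (0:ℝ) < (N:ℝ) + 2 := by positivity
  have hgpos : 0 < gg (N+2) := by unfold gg; positivity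
  have hgval : gg (N+2) = 1/(8*((N:ℝ)+2)) := by unfold gg; push_cast; ring_nf
  rw [Pn, Measure.pi_pi]
  rw [Fin.prod_univ_succ, Fin.prod_univ_succ]
  have h0 : (unif.prod (gaussianReal 0 v)) (cell (N+2) m k 0)
      = ENNReal.ofReal (delta m/3) * gaussianReal 0 v (Set.Ioo 1 2) := by
    have : cell (N+2) m k 0
        = Set.Ioo (1/4 + k*delta m) (1/4 + k*delta m + delta m/3) ×ˢ Set.Ioo 1 2 := by
      rw [cell, if_pos (show (((0: Fin (N+2))):ℕ) = 0 by simp)]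
    rw [this, Measure.prod_prod, unif_Ioo (by positivity) (by linarith)]
    congr 1
    congr 1
    ring
  have h1 : (unif.prod (gaussianReal 0 v)) (cell (N+2) m k (Fin.succ 0))
      = ENNReal.ofReal (delta m/3) * gaussianReal 0 v (Set.Ioo (-2) (-1)) := by
    have : cell (N+2) m k (Fin.succ 0)
        = Set.Ioo (1/4 + k*delta m + 2*delta m/3) (1/4 + k*delta m + delta m)
          ×ˢ Set.Ioo (-2) (-1) := by
      rw [cell, if_neg (by simp), if_pos (by simp)]
    rw [this, Measure.prod_prod, unif_Ioo (by positivity) (by linarith)]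
    congr 1
    congr 1
    ring
  have hmid : ∀ i : Fin N, (unif.prod (gaussianReal 0 v)) (cell (N+2) m k i.succ.succ)
      = ENNReal.ofReal (gg (N+2)) * gaussianReal 0 v (Set.Ioo 0 1) := by
    intro i
    have hval : ((i.succ.succ : Fin (N+2)) : ℕ) = (i:ℕ) + 2 := rfl
    have : cell (N+2) m k i.succ.succ
        = Set.Ioo (5/8 + ((2*((i:ℕ)+2-2) : ℕ) : ℝ)*gg (N+2))
            (5/8 + (((2*((i:ℕ)+2-2) : ℕ) : ℝ)+1)*gg (N+2)) ×ˢ Set.Ioo 0 1 := by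
      rw [cell, if_neg (by omega), if_neg (by omega)]
      rw [hval]
    rw [this, Measure.prod_prod]
    have hle : ((2*((i:ℕ)+2-2) : ℕ) : ℝ) + 1 ≤ ((2*(N+2) : ℕ) : ℝ) := by
      have : (2*((i:ℕ)+2-2) : ℕ) + 1 ≤ (2*(N+2) : ℕ) := by omega
      exact_mod_cast this
    have h3 : ((2*(N+2) : ℕ):ℝ) * gg (N+2) = 1/4 := by
      rw [hgval]; push_cast; field_simp; ring
    have hub : 5/8 + (((2*((i:ℕ)+2-2) : ℕ) : ℝ)+1)*gg (N+2) ≤ 1 := by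
      nlinarith [mul_le_mul_of_nonneg_right hle hgpos.le]
    rw [unif_Ioo (by positivity) hub]
    congr 1
    congr 1
    ring
  rw [h0]
  congr 1
  rw [h1]
  congr 1
  rw [Finset.prod_congr rfl (fun i _ => hmid i), Finset.prod_const]
  congr 1
  simp

set_option maxHeartbeats 1000000 in
lemma Lp_lower (v : ℝ≥0) (p : ℝ) (hp : 1 ≤ p) (f : ℝ → ℝ) (B : ℝ) (hB : 1 ≤ B)
    (hf : ∀ t, 0 ≤ t → t ≤ 1/8 → 1 + B ≤ f t) :
    ENNReal.ofReal B * (ENNReal.ofReal (1/8) * gaussianReal 0 v (Set.Ioo (-1) 0))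
      ≤ Lp (fun _ => 0) (gaussianReal 0 v) p f := by
  set box : Set (ℝ × ℝ) := Set.Ioo (0:ℝ) (1/8) ×ˢ Set.Ioo (-1:ℝ) 0 with hboxdef
  have hbox : MeasurableSet box := measurableSet_Ioo.prod measurableSet_Ioo
  have hpt : ∀ z : ℝ × ℝ, box.indicator (fun _ => ENNReal.ofReal B) z
      ≤ ENNReal.ofReal (|f z.1 - ((fun _ : ℝ => (0:ℝ)) z.1 + z.2)| ^ p) := by
    intro z
    by_cases hz : z ∈ box
    · rw [Set.indicator_of_mem hz]
      obtain ⟨hz1, hz2⟩ := hz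
      have hft : 1 + B ≤ f z.1 := hf _ hz1.1.le hz1.2.le
      have harg : 1 + B ≤ f z.1 - (0 + z.2) := by
        have := hz2.2
        simp only [zero_add]
        linarith
      have habs : |f z.1 - (0 + z.2)| = f z.1 - (0 + z.2) := abs_of_pos (by linarith)
      apply ENNReal.ofReal_le_ofReal
      have h1 : (1:ℝ) ≤ |f z.1 - (0 + z.2)| := by rw [habs]; linarith
      have h2 := Real.rpow_le_rpow_of_exponent_le h1 hp
      rw [Real.rpow_one] at h2
      have h3 : B ≤ |f z.1 - (0 + z.2)| := by rw [habs]; linarith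
      exact le_trans h3 h2
    · rw [Set.indicator_of_notMem hz]
      exact zero_le
  have hmeas : (unif.prod (gaussianReal 0 v)) box
      = ENNReal.ofReal (1/8) * gaussianReal 0 v (Set.Ioo (-1) 0) := by
    rw [hboxdef, Measure.prod_prod, unif_Ioo (le_refl 0) (by norm_num)]
    norm_num
  calc ENNReal.ofReal B * (ENNReal.ofReal (1/8) * gaussianReal 0 v (Set.Ioo (-1) 0))
      = ∫⁻ z, box.indicator (fun _ => ENNReal.ofReal B) z ∂(unif.prod (gaussianReal 0 v)) := by
        rw [lintegral_indicator_const hbox, hmeas]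
  _ ≤ Lp (fun _ => 0) (gaussianReal 0 v) p f := by
      exact lintegral_mono hpt


/-- number of cells at scale m -/
def Km (m : ℕ) : ℕ := 12^m / 4

def Em (N m k : ℕ) : Set (Fin (N+2) → ℝ × ℝ) :=
  if N + 6 ≤ m ∧ k < Km m then Set.pi Set.univ (cell (N+2) m k) else ∅

lemma Em_measurable (N m k : ℕ) : MeasurableSet (Em N m k) := by
  unfold Em
  split_ifs
  · exact MeasurableSet.univ_pi (fun i => cell_measurable _ _ _ i)
  · exact MeasurableSet.empty

lemma Km_real {m k : ℕ} (hk : k < Km m) : ((k:ℝ)+1) * delta m ≤ 1/4 := by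
  have h1 : k + 1 ≤ Km m := hk
  have h2 : Km m * 4 ≤ 12^m := Nat.div_mul_le_self _ _
  have h3 : (k + 1) * 4 ≤ 12^m := le_trans (Nat.mul_le_mul_right 4 h1) h2
  have h4 : (((k+1) * 4 : ℕ) : ℝ) ≤ ((12^m : ℕ) : ℝ) := by exact_mod_cast h3
  push_cast at h4
  have h5 : (0:ℝ) < (12:ℝ)^m := by positivity
  unfold delta
  rw [mul_inv_le_iff₀ h5]
  linarith

lemma Km_lb {m : ℕ} (hm : 1 ≤ m) : (12:ℝ)^m / 8 ≤ (Km m : ℝ) := by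
  have h1 : 12 ^ m ≤ 8 * Km m := by
    have h2 : 12^m = 4 * Km m + 12^m % 4 := (Nat.div_add_mod _ _).symm
    have h3 : 12^m % 4 < 4 := Nat.mod_lt _ (by norm_num)
    have h4 : 1 ≤ Km m := by
      have : 4 ≤ 12^m := by
        calc 4 ≤ 12^1 := by norm_num
        _ ≤ 12^m := Nat.pow_le_pow_right (by norm_num) hm
      exact Nat.one_le_div_iff (by norm_num) |>.mpr this
    omega
  have h5 : ((12^m : ℕ) : ℝ) ≤ ((8 * Km m : ℕ) : ℝ) := by exact_mod_cast h1
  push_cast at h5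
  linarith

lemma Em_elim {N m k : ℕ} {ω : Fin (N+2) → ℝ × ℝ} (h : ω ∈ Em N m k) :
    (N + 6 ≤ m ∧ k < Km m) ∧ ∀ i, ω i ∈ cell (N+2) m k i := by
  unfold Em at h
  split_ifs at h with hc
  · exact ⟨hc, fun i => h i (Set.mem_univ i)⟩
  · exact absurd h (Set.notMem_empty ω)

lemma disj_same {N m k k' : ℕ} (hkk : k < k') {ω : Fin (N+2) → ℝ × ℝ}
    (h : ω ∈ Em N m k) (h' : ω ∈ Em N m k') : False := by
  obtain ⟨-, hc⟩ := Em_elim h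
  obtain ⟨-, hc'⟩ := Em_elim h'
  have h0 : (ω ⟨0, by omega⟩).1 ∈ Ioo (1/4 + k*delta m) (1/4 + k*delta m + delta m/3)
      ∧ (ω ⟨0, by omega⟩).2 ∈ Ioo (1:ℝ) 2 := by
    have hh := hc ⟨0, by omega⟩
    rw [cell, if_pos (by simp)] at hh
    exact hh
  have h0' : (ω ⟨0, by omega⟩).1 ∈ Ioo (1/4 + k'*delta m) (1/4 + k'*delta m + delta m/3)
      ∧ (ω ⟨0, by omega⟩).2 ∈ Ioo (1:ℝ) 2 := by
    have hh := hc' ⟨0, by omega⟩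
    rw [cell, if_pos (by simp)] at hh
    exact hh
  have hδ : 0 < delta m := by unfold delta; positivity
  have hcast : (k:ℝ) + 1 ≤ (k':ℝ) := by exact_mod_cast hkk
  have ha := h0.1.2
  have hb := h0'.1.1
  nlinarith

lemma disj_lt {N m k m' k' : ℕ} (hmm : m < m') {ω : Fin (N+2) → ℝ × ℝ}
    (h : ω ∈ Em N m k) (h' : ω ∈ Em N m' k') : False := by
  obtain ⟨-, hc⟩ := Em_elim h
  obtain ⟨-, hc'⟩ := Em_elim h'
  have h0 : (ω ⟨0, by omega⟩).1 ∈ Ioo (1/4 + k*delta m) (1/4 + k*delta m + delta m/3)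
      ∧ (ω ⟨0, by omega⟩).2 ∈ Ioo (1:ℝ) 2 := by
    have hh := hc ⟨0, by omega⟩
    rw [cell, if_pos (by simp)] at hh
    exact hh
  have h1 : (ω ⟨1, by omega⟩).1 ∈ Ioo (1/4 + k*delta m + 2*delta m/3) (1/4 + k*delta m + delta m)
      ∧ (ω ⟨1, by omega⟩).2 ∈ Ioo (-2:ℝ) (-1) := by
    have hh := hc ⟨1, by omega⟩
    rw [cell, if_neg (by simp), if_pos (by simp)] at hh
    exact hh
  have h0' : (ω ⟨0, by omega⟩).1 ∈ Ioo (1/4 + k'*delta m') (1/4 + k'*delta m' + delta m'/3)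
      ∧ (ω ⟨0, by omega⟩).2 ∈ Ioo (1:ℝ) 2 := by
    have hh := hc' ⟨0, by omega⟩
    rw [cell, if_pos (by simp)] at hh
    exact hh
  have h1' : (ω ⟨1, by omega⟩).1
      ∈ Ioo (1/4 + k'*delta m' + 2*delta m'/3) (1/4 + k'*delta m' + delta m')
      ∧ (ω ⟨1, by omega⟩).2 ∈ Ioo (-2:ℝ) (-1) := by
    have hh := hc' ⟨1, by omega⟩
    rw [cell, if_neg (by simp), if_pos (by simp)] at hh
    exact hh
  have hδ : 0 < delta m := by unfold delta; positivity
  have hδ' : delta m' ≤ delta m / 12 := by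
    unfold delta
    have hsm : (12:ℝ)^(m+1) ≤ (12:ℝ)^m' := by
      apply pow_le_pow_right₀ (by norm_num)
      omega
    have hp1 : (0:ℝ) < (12:ℝ)^(m+1) := by positivity
    have := inv_anti₀ hp1 hsm
    calc ((12:ℝ)^m')⁻¹ ≤ ((12:ℝ)^(m+1))⁻¹ := this
    _ = ((12:ℝ)^m)⁻¹ / 12 := by rw [pow_succ]; field_simp
  -- gap comparison
  have hgapA : delta m / 3 < (ω ⟨1, by omega⟩).1 - (ω ⟨0, by omega⟩).1 := by
    have := h1.1.1
    have := h0.1.2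
    linarith [h1.1.1, h0.1.2]
  have hgapB : (ω ⟨1, by omega⟩).1 - (ω ⟨0, by omega⟩).1 < delta m' := by
    linarith [h1'.1.2, h0'.1.1]
  linarith

lemma Em_disjoint {N : ℕ} {q q' : ℕ × ℕ} (hne : q ≠ q') {ω : Fin (N+2) → ℝ × ℝ}
    (h : ω ∈ Em N q.1 q.2) (h' : ω ∈ Em N q'.1 q'.2) : False := by
  rcases Nat.lt_trichotomy q.1 q'.1 with hm | hm | hm
  · exact disj_lt hm h h'
  · rcases Nat.lt_trichotomy q.2 q'.2 with hk | hk | hk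
    · rw [hm] at h
      exact disj_same hk h h'
    · exact hne (Prod.ext hm hk)
    · rw [hm] at h
      exact disj_same hk h' h
  · exact disj_lt hm h' h

end MN

set_option maxHeartbeats 1600000 in
/-- **Theorem (infinite expected `L_p` loss for `1 ≤ p < 2`).**
For `f* ≡ 0` and Gaussian label noise `ε ~ N(0,σ²)`, for any (a.e. defined) selection
`F` of the min-norm interpolator `f̂_S` of the sample `S ~ D^n` (`n ≥ 2`), the expected
population loss is infinite: `E_S [L_p(f̂_S)] = ∞`. -/
theorem min_norm_expected_Lp_infinite (σ : ℝ) (hσ : 0 < σ)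
    (p : ℝ) (hp1 : 1 ≤ p) (hp2 : p < 2) (n : ℕ) (hn : 2 ≤ n)
    (F : (Fin n → ℝ × ℝ) → (ℝ → ℝ))
    (hF : ∀ᵐ ω ∂(Pn (gaussianReal 0 ⟨σ ^ 2, sq_nonneg σ⟩) n),
      IsMinNormNet (sampleOf (fun _ => 0) ω) (F ω)) :
    ∫⁻ ω, Lp (fun _ => 0) (gaussianReal 0 ⟨σ ^ 2, sq_nonneg σ⟩) p (F ω)
        ∂(Pn (gaussianReal 0 ⟨σ ^ 2, sq_nonneg σ⟩) n) = ⊤ := by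
  obtain ⟨N, rfl⟩ : ∃ N, n = N + 2 := ⟨n - 2, by omega⟩
  set v : ℝ≥0 := ⟨σ ^ 2, sq_nonneg σ⟩ with hvdef
  have hv : v ≠ 0 := by
    intro h
    have h2 : (v : ℝ) = 0 := by rw [h]; simp
    have h3 : (v : ℝ) = σ ^ 2 := rfl
    nlinarith [hσ]
  set ν : Measure ℝ := gaussianReal 0 v with hνdef
  set γ0 : ℝ≥0∞ := ν (Set.Ioo (-1) 0) with hγ0
  set γ1 : ℝ≥0∞ := ν (Set.Ioo 1 2) with hγ1
  set γ2 : ℝ≥0∞ := ν (Set.Ioo (-2) (-1)) with hγ2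
  set γ3 : ℝ≥0∞ := ν (Set.Ioo 0 1) with hγ3
  set Q3 : ℝ≥0∞ := (ENNReal.ofReal (MN.gg (N+2)) * γ3) ^ N with hQ3
  set cst : ℕ → ℝ≥0∞ :=
    fun m => ENNReal.ofReal ((12:ℝ)^m/16) * (ENNReal.ofReal (1/8) * γ0) with hcst
  set G : (Fin (N+2) → ℝ × ℝ) → ℝ≥0∞ :=
    fun ω => ∑' q : ℕ × ℕ, (MN.Em N q.1 q.2).indicator (fun _ => cst q.1) ω with hG
  -- step 1 : a.e. pointwise bound
  have hGle : ∀ᵐ ω ∂(Pn ν (N+2)), G ω ≤ Lp (fun _ => 0) ν p (F ω) := by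
    filter_upwards [hF] with ω hmin
    by_cases hex : ∃ q : ℕ × ℕ, ω ∈ MN.Em N q.1 q.2
    · obtain ⟨q0, hq0⟩ := hex
      have hGval : G ω = cst q0.1 := by
        rw [hG]
        simp only []
        rw [tsum_eq_single q0]
        · rw [Set.indicator_of_mem hq0]
        · intro q' hq'
          by_cases hmem : ω ∈ MN.Em N q'.1 q'.2
          · exact absurd (MN.Em_disjoint hq' hmem hq0) (by simp)
          · rw [Set.indicator_of_notMem hmem]
      rw [hGval]
      obtain ⟨⟨hm6, hklt⟩, hcell⟩ := MN.Em_elim hq0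
      have hbig := MN.event_big hm6 (MN.Km_real hklt) ω hcell (F ω) hmin
      have hB : 1 ≤ (12:ℝ)^q0.1/16 := by
        have h16 : (16:ℝ) ≤ (12:ℝ)^q0.1 := by
          calc (16:ℝ) ≤ 12^2 := by norm_num
          _ ≤ (12:ℝ)^q0.1 := by
              apply pow_le_pow_right₀ (by norm_num)
              omega
        linarith
      exact MN.Lp_lower v p hp1 (F ω) ((12:ℝ)^q0.1/16) hB hbig
    · push_neg at hex
      have hGz : G ω = 0 := by
        rw [hG]
        simp only []
        rw [ENNReal.tsum_eq_zero.mpr]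
        intro q
        rw [Set.indicator_of_notMem (hex q)]
      rw [hGz]
      exact zero_le
  -- step 2 : integral of G
  have hint : ∫⁻ ω, G ω ∂(Pn ν (N+2))
      = ∑' q : ℕ × ℕ, cst q.1 * (Pn ν (N+2)) (MN.Em N q.1 q.2) := by
    rw [hG]
    simp only []
    rw [lintegral_tsum (f := fun q : ℕ × ℕ => (MN.Em N q.1 q.2).indicator (fun _ => cst q.1))
      (fun q => (measurable_const.indicator (MN.Em_measurable N q.1 q.2)).aemeasurable)]
    exact tsum_congr fun q => lintegral_indicator_const (MN.Em_measurable N q.1 q.2) _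
  -- step 3 : the tsum is infinite
  have hγ0ne : γ0 ≠ 0 := MN.gauss_Ioo_ne_zero hv (by norm_num)
  have hγ1ne : γ1 ≠ 0 := MN.gauss_Ioo_ne_zero hv (by norm_num)
  have hγ2ne : γ2 ≠ 0 := MN.gauss_Ioo_ne_zero hv (by norm_num)
  have hγ3ne : γ3 ≠ 0 := MN.gauss_Ioo_ne_zero hv (by norm_num)
  have hQ3ne : Q3 ≠ 0 := by
    rw [hQ3]
    apply pow_ne_zero
    apply mul_ne_zero _ hγ3ne
    have : 0 < MN.gg (N+2) := by unfold MN.gg; positivity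
    exact ne_of_gt (ENNReal.ofReal_pos.mpr this)
  set cstar : ℝ≥0∞ := ENNReal.ofReal (1/9216)
      * ((ENNReal.ofReal (1/8) * γ0) * (γ1 * (γ2 * Q3))) with hcstar
  have hcstarne : cstar ≠ 0 := by
    rw [hcstar]
    apply mul_ne_zero
    · exact ne_of_gt (ENNReal.ofReal_pos.mpr (by norm_num))
    · apply mul_ne_zero
      · apply mul_ne_zero _ hγ0ne
        exact ne_of_gt (ENNReal.ofReal_pos.mpr (by norm_num))
      · exact mul_ne_zero hγ1ne (mul_ne_zero hγ2ne hQ3ne)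
  have hm_lower : ∀ m : ℕ, N + 6 ≤ m →
      cstar ≤ ∑' k : ℕ, cst m * (Pn ν (N+2)) (MN.Em N m k) := by
    intro m hm6
    have hδ : 0 < MN.delta m := by unfold MN.delta; positivity
    -- value of each term with k < Km m
    have hterm : ∀ k, k < MN.Km m → cst m * (Pn ν (N+2)) (MN.Em N m k)
        = cst m * ((ENNReal.ofReal (MN.delta m/3) * γ1)
          * ((ENNReal.ofReal (MN.delta m/3) * γ2) * Q3)) := by
      intro k hk
      have hE : MN.Em N m k = Set.pi Set.univ (MN.cell (N+2) m k) := by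
        unfold MN.Em
        rw [if_pos ⟨hm6, hk⟩]
      rw [hE, MN.event_prob v N m k (MN.Km_real hk)]
    calc cstar ≤ (MN.Km m : ℝ≥0∞) * (cst m * ((ENNReal.ofReal (MN.delta m/3) * γ1)
          * ((ENNReal.ofReal (MN.delta m/3) * γ2) * Q3))) := by
          -- numeric inequality
          have hofKm : ENNReal.ofReal ((12:ℝ)^m/8) ≤ (MN.Km m : ℝ≥0∞) := by
            rw [← ENNReal.ofReal_natCast]
            exact ENNReal.ofReal_le_ofReal (MN.Km_lb (by omega))
          have hcombine : ENNReal.ofReal ((12:ℝ)^m/8) * (ENNReal.ofReal ((12:ℝ)^m/16)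
              * (ENNReal.ofReal (MN.delta m/3) * ENNReal.ofReal (MN.delta m/3)))
              = ENNReal.ofReal (1/1152) := by
            rw [← ENNReal.ofReal_mul (by positivity), ← ENNReal.ofReal_mul (by positivity),
              ← ENNReal.ofReal_mul (by positivity)]
            congr 1
            unfold MN.delta
            field_simp
            ring
          have hnum : ENNReal.ofReal (1/9216) ≤ (MN.Km m : ℝ≥0∞)
              * (ENNReal.ofReal ((12:ℝ)^m/16)
                * (ENNReal.ofReal (MN.delta m/3) * ENNReal.ofReal (MN.delta m/3))) := by
            calc ENNReal.ofReal (1/9216) ≤ ENNReal.ofReal (1/1152) :=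
              ENNReal.ofReal_le_ofReal (by norm_num)
            _ = ENNReal.ofReal ((12:ℝ)^m/8) * (ENNReal.ofReal ((12:ℝ)^m/16)
                * (ENNReal.ofReal (MN.delta m/3) * ENNReal.ofReal (MN.delta m/3))) :=
              hcombine.symm
            _ ≤ _ := by
              exact mul_le_mul_left hofKm _
          calc cstar = (ENNReal.ofReal (1/9216))
              * ((ENNReal.ofReal (1/8) * γ0) * (γ1 * (γ2 * Q3))) := hcstar
          _ ≤ ((MN.Km m : ℝ≥0∞) * (ENNReal.ofReal ((12:ℝ)^m/16)
                * (ENNReal.ofReal (MN.delta m/3) * ENNReal.ofReal (MN.delta m/3))))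
              * ((ENNReal.ofReal (1/8) * γ0) * (γ1 * (γ2 * Q3))) :=
            mul_le_mul_left hnum _
          _ = (MN.Km m : ℝ≥0∞) * (cst m * ((ENNReal.ofReal (MN.delta m/3) * γ1)
              * ((ENNReal.ofReal (MN.delta m/3) * γ2) * Q3))) := by
            rw [hcst]
            ring
    _ ≤ ∑' k : ℕ, cst m * (Pn ν (N+2)) (MN.Em N m k) := by
        have hsum : ∑ k ∈ Finset.range (MN.Km m), cst m * (Pn ν (N+2)) (MN.Em N m k)
            = (MN.Km m : ℝ≥0∞) * (cst m * ((ENNReal.ofReal (MN.delta m/3) * γ1)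
              * ((ENNReal.ofReal (MN.delta m/3) * γ2) * Q3))) := by
          rw [Finset.sum_congr rfl (fun k hk => hterm k (Finset.mem_range.mp hk))]
          rw [Finset.sum_const, Finset.card_range, nsmul_eq_mul]
        rw [← hsum]
        exact ENNReal.sum_le_tsum _
  have htop : ∑' q : ℕ × ℕ, cst q.1 * (Pn ν (N+2)) (MN.Em N q.1 q.2) = ⊤ := by
    rw [ENNReal.tsum_prod (f := fun m k => cst m * (Pn ν (N+2)) (MN.Em N m k))]
    rw [eq_top_iff]
    calc (⊤ : ℝ≥0∞) = ∑' _ : ℕ, cstar := (ENNReal.tsum_const_eq_top_of_ne_zero hcstarne).symm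
    _ ≤ ∑' j : ℕ, ∑' k : ℕ, cst (j + (N+6)) * (Pn ν (N+2)) (MN.Em N (j + (N+6)) k) :=
        ENNReal.tsum_le_tsum (fun j => hm_lower (j + (N+6)) (by omega))
    _ ≤ ∑' m : ℕ, ∑' k : ℕ, cst m * (Pn ν (N+2)) (MN.Em N m k) :=
        ENNReal.tsum_comp_le_tsum_of_injective (add_left_injective (N+6))
          (fun m => ∑' k : ℕ, cst m * (Pn ν (N+2)) (MN.Em N m k))
  have hfinal := lintegral_mono_ae hGle
  rw [hint, htop] at hfinal
  exact top_le_iff.mp hfinal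


end
end

section
/- Let f* ≡ 0, let the label noise be ε ~ N(0, σ²) for some σ > 0, and let D be the corresponding distribution on [0,1]×ℝ (x ~ Uniform([0,1]), y = ε). For S ~ D^n with n ≥ 2 and sorted points 0 < x₁ < ... < xₙ < 1, let ĥ_S be the extended linear-spline interpolator: ĥ_S equals the linear spline ĝ_S on [x₁, xₙ], equals g₁ (extended) on [0, x₁), and equals g_{n−1} (extended) on (xₙ, 1]. Then the expected L₁ population loss of ĥ_S is infinite: E_S[ L₁(ĥ_S) ] = ∞. -/
/-!
If the first two sample points satisfy `1/4 < x₀ < x₁ < 1/2` and all the others lie in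
`(1/2, 1)`, they are the two leftmost points, so on `[x₀ - 1/4, x₀)` the extended spline is the
line through `(x₀, y₀)` and `(x₁, y₁)`. Jensen's inequality in the noise bounds the `L₁` loss
below by the absolute value of the integral of that line, `|y₀/4 - (y₁ - y₀)/(32 (x₁ - x₀))|`.
For symmetric noise, averaging over `y₁` leaves at least `E|ε| / (32 (x₁ - x₀))`, and
`1/(x₁ - x₀)` is not integrable as `x₁ ↓ x₀`.
-/

open MeasureTheory ProbabilityTheory Filter Set
open scoped ENNReal NNReal

noncomputable section

/-- The affine function through `(x₁,y₁)` and `(x₂,y₂)`. -/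
def affThrough (x₁ y₁ x₂ y₂ : ℝ) : ℝ → ℝ :=
  fun t => y₁ + (y₂ - y₁) / (x₂ - x₁) * (t - x₁)

/-- `g` is the linear-spline interpolator of the `n` sorted points
`(x 0, y 0), …, (x (n-1), y (n-1))` (0-indexed): it equals `y 0` on `(-∞, x 0)`,
the affine interpolant `g_i` on each `[x i, x (i+1))`, and `y (n-1)` on `[x (n-1), ∞)`. -/
def IsLinSpline (n : ℕ) (x y : ℕ → ℝ) (g : ℝ → ℝ) : Prop :=
  (∀ t, t < x 0 → g t = y 0) ∧
  (∀ i, i + 1 < n → ∀ t ∈ Set.Ico (x i) (x (i + 1)),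
      g t = affThrough (x i) (y i) (x (i + 1)) (y (i + 1)) t) ∧
  (∀ t, x (n - 1) ≤ t → g t = y (n - 1))

/-- `x, y` (restricted to indices `< n`) enumerates the sample `S` in strictly increasing
order of the first coordinates. -/
def SortedVersion {n : ℕ} (S : Fin n → ℝ × ℝ) (x y : ℕ → ℝ) : Prop :=
  ∃ σ : Equiv.Perm (Fin n),
    (∀ i : Fin n, x (i : ℕ) = (S (σ i)).1 ∧ y (i : ℕ) = (S (σ i)).2) ∧
    (∀ i j : Fin n, i < j → x (i : ℕ) < x (j : ℕ))

/-- `h` is the extended linear-spline interpolator `ĥ_S` of the sorted points: it agrees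
with the linear spline on `[x 0, x (n-1)]`, equals the extension of the first affine piece
`g₁` on `(-∞, x 0)`, and equals the extension of the last affine piece `g_{n-1}` on
`[x (n-1), ∞)`. -/
def IsExtSpline (n : ℕ) (x y : ℕ → ℝ) (h : ℝ → ℝ) : Prop :=
  (∀ t, t < x 0 → h t = affThrough (x 0) (y 0) (x 1) (y 1) t) ∧
  (∀ i, i + 1 < n → ∀ t ∈ Set.Ico (x i) (x (i + 1)),
      h t = affThrough (x i) (y i) (x (i + 1)) (y (i + 1)) t) ∧
  (∀ t, x (n - 1) ≤ t → h t = affThrough (x (n - 2)) (y (n - 2)) (x (n - 1)) (y (n - 1)) t)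

instance : IsProbabilityMeasure unif :=
  ⟨by rw [unif, Measure.restrict_apply_univ, Real.volume_Icc]; norm_num⟩

theorem unif_restrict_of_subset {s : Set ℝ} (hs : s ⊆ Icc 0 1) :
    unif.restrict s = volume.restrict s := by
  rw [unif, Measure.restrict_restrict' measurableSet_Icc, inter_eq_self_of_subset_left hs]

theorem unif_apply_of_subset {s : Set ℝ} (hs : s ⊆ Icc 0 1) : unif s = volume s := by
  rw [unif, Measure.restrict_apply' measurableSet_Icc, inter_eq_self_of_subset_left hs]

theorem unif_prod_Ioo_ne_zero {ν : Measure ℝ} [IsProbabilityMeasure ν] {a b : ℝ} (ha : 0 ≤ a)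
    (hab : a < b) (hb : b ≤ 1) : unif.prod ν (Ioo a b ×ˢ univ) ≠ 0 := by
  rw [Measure.prod_prod, measure_univ, mul_one,
    unif_apply_of_subset fun t ht => ⟨ha.trans ht.1.le, ht.2.le.trans hb⟩, Real.volume_Ioo]
  simpa using hab

theorem lintegral_pi_fin_succ {α : Type*} [MeasurableSpace α] (μ : Measure α) [SigmaFinite μ]
    {k : ℕ} {F : α → (Fin k → α) → ℝ≥0∞} (hF : Measurable (Function.uncurry F)) :
    ∫⁻ ω, F (ω 0) (Fin.tail ω) ∂Measure.pi (fun _ : Fin (k + 1) => μ) =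
      ∫⁻ a, ∫⁻ ρ, F a ρ ∂Measure.pi (fun _ => μ) ∂μ := by
  rw [lintegral_lintegral hF.aemeasurable]
  exact (measurePreserving_piFinSuccAbove (fun _ => μ) 0).lintegral_comp hF

theorem lintegral_pi_fin_add_two {α : Type*} [MeasurableSpace α] (μ : Measure α) [SigmaFinite μ]
    {k : ℕ} {f : α → α → ℝ≥0∞} (hf : Measurable (Function.uncurry f))
    {g : (Fin k → α) → ℝ≥0∞} (hg : Measurable g) :
    ∫⁻ ω, f (ω 0) (ω 1) * g (Fin.tail (Fin.tail ω)) ∂Measure.pi (fun _ : Fin (k + 2) => μ) =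
      (∫⁻ a, ∫⁻ b, f a b ∂μ ∂μ) * ∫⁻ ρ, g ρ ∂Measure.pi (fun _ => μ) := by
  have htail : Measurable (Fin.tail : (Fin (k + 1) → α) → Fin k → α) :=
    measurable_pi_lambda _ fun i => measurable_pi_apply _
  refine (lintegral_pi_fin_succ μ (F := fun a ρ => f a (ρ 0) * g (Fin.tail ρ))
    ((hf.comp (measurable_fst.prodMk ((measurable_pi_apply 0).comp measurable_snd))).mul
      (hg.comp (htail.comp measurable_snd)))).trans ?_
  have hfiber : Measurable fun a => ∫⁻ b, f a b ∂μ := hf.lintegral_prod_right'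
  rw [← lintegral_mul_const _ hfiber]
  refine lintegral_congr fun a => ?_
  rw [lintegral_pi_fin_succ μ (F := fun b ρ => f a b * g ρ)
    ((hf.comp (measurable_const.prodMk measurable_fst)).mul (hg.comp measurable_snd)),
    ← lintegral_mul_const (f := f a) _ (hf.comp measurable_prodMk_left)]
  exact lintegral_congr fun b => lintegral_const_mul _ hg

theorem setLIntegral_Ioo_inv_sub_eq_top {a b : ℝ} (hab : a < b) :
    ∫⁻ x in Ioo a b, ENNReal.ofReal (x - a)⁻¹ = ∞ := by
  by_contra h
  have hint : IntegrableOn (fun x => (x - a)⁻¹) (Ioo a b) :=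
    (lintegral_ofReal_ne_top_iff_integrable (by fun_prop)
      ((ae_restrict_iff' measurableSet_Ioo).2 (ae_of_all _ fun x hx =>
        inv_nonneg.2 (sub_nonneg.2 hx.1.le)))).1 h
  have := (intervalIntegrable_iff_integrableOn_Ioo_of_le hab.le).2 hint
  simp [hab.ne, hab.le] at this

theorem ofReal_abs_sub_integral_le (μ : Measure ℝ) [IsProbabilityMeasure μ]
    (hμ : Integrable (fun y => y) μ) (a : ℝ) :
    ENNReal.ofReal |a - ∫ y, y ∂μ| ≤ ∫⁻ y, ENNReal.ofReal |a - y| ∂μ := by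
  have hmean : ∫ y, (a - y) ∂μ = a - ∫ y, y ∂μ := by
    rw [integral_sub (integrable_const a) hμ, integral_const, probReal_univ, one_smul]
  simpa only [hmean, Real.enorm_eq_ofReal_abs] using
    enorm_integral_le_lintegral_enorm (fun y => a - y) (μ := μ)

theorem lintegral_ofReal_abs_le_lintegral_ofReal_abs_sub (μ : Measure ℝ) [μ.IsNegInvariant]
    (c : ℝ) :
    ∫⁻ y, ENNReal.ofReal |y| ∂μ ≤ ∫⁻ y, ENNReal.ofReal |c - y| ∂μ := by
  have hsymm : ∫⁻ y, ENNReal.ofReal |c + y| ∂μ = ∫⁻ y, ENNReal.ofReal |c - y| ∂μ := by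
    simpa [sub_eq_add_neg] using
      (lintegral_neg_eq_self (fun y => ENNReal.ofReal |c + y|) (μ := μ)).symm
  have h2 : 2 * ∫⁻ y, ENNReal.ofReal |y| ∂μ ≤ 2 * ∫⁻ y, ENNReal.ofReal |c - y| ∂μ :=
    calc 2 * ∫⁻ y, ENNReal.ofReal |y| ∂μ = ∫⁻ y, ENNReal.ofReal |(c + y) - (c - y)| ∂μ := by
          rw [← lintegral_const_mul _ (by fun_prop)]
          congr 1 with y
          rw [show (c + y) - (c - y) = 2 * y by ring, abs_mul, ENNReal.ofReal_mul (by norm_num)]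
          norm_num
      _ ≤ ∫⁻ y, ENNReal.ofReal |c + y| + ENNReal.ofReal |c - y| ∂μ := by
          gcongr with y
          rw [← ENNReal.ofReal_add (abs_nonneg _) (abs_nonneg _)]
          exact ENNReal.ofReal_le_ofReal (abs_sub _ _)
      _ = 2 * ∫⁻ y, ENNReal.ofReal |c - y| ∂μ := by
          rw [lintegral_add_left (by fun_prop), hsymm, two_mul]
  exact (ENNReal.mul_le_mul_iff_right (by norm_num) (by norm_num)).1 h2

theorem lintegral_ofReal_abs_pos (μ : Measure ℝ) [NullSingletonClass μ] [NeZero μ] :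
    0 < ∫⁻ y, ENNReal.ofReal |y| ∂μ := by
  refine pos_iff_ne_zero.2 fun h => NeZero.ne μ ?_
  have hne : μ {y | ENNReal.ofReal |y| ≠ 0} = 0 := (lintegral_eq_zero_iff (by fun_prop)).1 h
  have hcover : {y : ℝ | ENNReal.ofReal |y| ≠ 0} ∪ {0} = univ := by
    ext y; by_cases hy : y = 0 <;> simp [hy]
  rw [← Measure.measure_univ_eq_zero, ← hcover]
  exact measure_union_null hne (measure_singleton 0)

theorem isNegInvariant_gaussianReal_zero (v : ℝ≥0) : (gaussianReal 0 v).IsNegInvariant :=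
  ⟨by simpa [Measure.neg_def] using gaussianReal_map_neg (μ := 0) (v := v)⟩

theorem Equiv.Perm.apply_eq_self_of_strictMono_comp {β : Type*} [LinearOrder β] {n : ℕ}
    {f : Fin n → β} {σ : Equiv.Perm (Fin n)} (hσ : StrictMono (f ∘ σ)) {i : Fin n}
    (hi : ∀ a ≤ i, ∀ m, a < m → f a < f m) : σ i = i := by
  induction i using WellFoundedLT.induction with
  | _ i ih =>
  have hprefix : ∀ a < i, σ a = a := fun a ha =>
    ih a ha fun b hb m hbm => hi b (hb.trans ha.le) m hbm
  by_contra hne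
  have hlt : i < σ i := by
    refine lt_of_le_of_ne (not_lt.1 fun h => ?_) (Ne.symm hne)
    exact hne (σ.injective (hprefix _ h))
  have hpre : i < σ.symm i := by
    refine lt_of_le_of_ne (not_lt.1 fun h => ?_) fun h => hne ?_
    · have := hprefix _ h
      rw [Equiv.apply_symm_apply] at this
      exact h.ne this.symm
    · exact (σ.symm_apply_eq.1 h.symm).symm
  have := hσ hpre
  simp only [Function.comp_apply, Equiv.apply_symm_apply] at this
  exact (hi i le_rfl _ hlt).not_gt this

theorem SortedVersion.apply_of_prefix_lt {n : ℕ} {S : Fin n → ℝ × ℝ} {x y : ℕ → ℝ}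
    (h : SortedVersion S x y) {i : Fin n} (hi : ∀ a ≤ i, ∀ m, a < m → (S a).1 < (S m).1) :
    x i = (S i).1 ∧ y i = (S i).2 := by
  obtain ⟨σ, hxy, hmono⟩ := h
  have hσ : StrictMono ((fun j => (S j).1) ∘ σ) := fun a b hab => by
    simpa only [Function.comp_apply, (hxy a).1, (hxy b).1] using hmono a b hab
  simpa only [σ.apply_eq_self_of_strictMono_comp hσ hi] using hxy i

theorem integral_affThrough_sub_left (a b c d L : ℝ) :
    ∫ t in (a - L)..a, affThrough a b c d t = L * b - (d - b) / (c - a) * L ^ 2 / 2 := by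
  have hslope : Continuous fun t => (d - b) / (c - a) * (t - a) := by fun_prop
  simp only [affThrough]
  rw [intervalIntegral.integral_add intervalIntegrable_const (hslope.intervalIntegrable _ _),
    intervalIntegral.integral_const, intervalIntegral.integral_const_mul,
    intervalIntegral.integral_comp_sub_right (fun t => t), integral_id]
  simp only [smul_eq_mul]
  ring

theorem setLIntegral_ofReal_abs_le_Lp {ν : Measure ℝ} [IsProbabilityMeasure ν]
    (hint : Integrable (fun y => y) ν) (hmean : ∫ y, y ∂ν = 0) {s : Set ℝ} (hs : MeasurableSet s)
    (hs01 : s ⊆ Icc 0 1) {f g : ℝ → ℝ} (hg : Measurable g) (hfg : EqOn f g s) :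
    ∫⁻ t in s, ENNReal.ofReal |g t| ≤ Lp (fun _ => 0) ν 1 f := by
  calc ∫⁻ t in s, ENNReal.ofReal |g t|
      ≤ ∫⁻ t in s, ∫⁻ e, ENNReal.ofReal |g t - e| ∂ν := by
        gcongr with t
        simpa [hmean] using ofReal_abs_sub_integral_le ν hint (g t)
    _ = ∫⁻ z in s ×ˢ univ, ENNReal.ofReal |g z.1 - z.2| ∂unif.prod ν := by
        rw [← Measure.prod_restrict, Measure.restrict_univ, unif_restrict_of_subset hs01,
          lintegral_prod _ (by fun_prop)]
    _ = ∫⁻ z in s ×ˢ univ, ENNReal.ofReal (|f z.1 - (0 + z.2)| ^ (1 : ℝ)) ∂unif.prod ν :=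
        setLIntegral_congr_fun (hs.prod MeasurableSet.univ) fun z hz => by
          rw [hfg hz.1, zero_add, Real.rpow_one]
    _ ≤ Lp (fun _ => 0) ν 1 f := setLIntegral_le_lintegral _ _

/-- On the event `1/4 < z₀.1 < z₁.1 < 1/2`, the absolute value of
`∫_{z₀.1 - 1/4}^{z₀.1}` of the affine function through `z₀` and `z₁`
(`integral_affThrough_sub_left` with `L = 1/4`). -/
def leftBound (z₀ z₁ : ℝ × ℝ) : ℝ≥0∞ :=
  if 4⁻¹ < z₀.1 ∧ z₀.1 < z₁.1 ∧ z₁.1 < 2⁻¹ then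
    ENNReal.ofReal |z₀.2 / 4 - (z₁.2 - z₀.2) / (z₁.1 - z₀.1) / 32|
  else 0

theorem measurable_leftBound : Measurable (Function.uncurry leftBound) := by
  have hevent : MeasurableSet
      {p : (ℝ × ℝ) × (ℝ × ℝ) | 4⁻¹ < p.1.1 ∧ p.1.1 < p.2.1 ∧ p.2.1 < 2⁻¹} :=
    (measurableSet_lt measurable_const measurable_fst.fst).inter
      ((measurableSet_lt measurable_fst.fst measurable_snd.fst).inter
        (measurableSet_lt measurable_snd.fst measurable_const))
  exact Measurable.ite hevent (by fun_prop) measurable_const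

theorem leftBound_le_Lp {ν : Measure ℝ} [IsProbabilityMeasure ν]
    (hint : Integrable (fun y => y) ν) (hmean : ∫ y, y ∂ν = 0) {k : ℕ}
    {ω : Fin (k + 2) → ℝ × ℝ} (hfar : ∀ j : Fin k, 2⁻¹ < (ω j.succ.succ).1) {x y : ℕ → ℝ}
    {h : ℝ → ℝ} (hsort : SortedVersion (sampleOf (fun _ => 0) ω) x y)
    (hext : IsExtSpline (k + 2) x y h) :
    leftBound (ω 0) (ω 1) ≤ Lp (fun _ => 0) ν 1 h := by
  unfold leftBound
  split_ifs with hev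
  swap
  · exact zero_le
  obtain ⟨h14, h01, h12⟩ := hev
  have hprefix : ∀ a ≤ (1 : Fin (k + 2)), ∀ m, a < m → (ω a).1 < (ω m).1 := by
    intro a ha m ham
    rcases Fin.eq_zero_or_eq_succ m with rfl | ⟨m, rfl⟩
    · exact absurd ham (Fin.not_lt_zero a)
    rcases Fin.eq_zero_or_eq_succ m with rfl | ⟨j, rfl⟩
    · obtain rfl : a = 0 := by rw [Fin.lt_def] at ham; ext; simpa using ham
      exact h01
    · have ha' : (ω a).1 < 2⁻¹ := by
        have : a = 0 ∨ a = 1 := by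
          simp only [Fin.ext_iff, Fin.le_def, Fin.val_zero, Fin.val_one] at ha ⊢
          omega
        rcases this with rfl | rfl <;> linarith
      linarith [hfar j]
  obtain ⟨hx₀, hy₀⟩ := hsort.apply_of_prefix_lt (i := 0) fun a ha m ham =>
    hprefix a (ha.trans (Fin.zero_le _)) m ham
  obtain ⟨hx₁, hy₁⟩ := hsort.apply_of_prefix_lt hprefix
  simp only [sampleOf, zero_add, Fin.val_zero, Fin.val_one] at hx₀ hy₀ hx₁ hy₁
  set u := (ω 0).1
  set I := Ico (u - 4⁻¹) u
  have hI : I ⊆ Icc 0 1 := fun t ht => ⟨by linarith [ht.1], by linarith [ht.2]⟩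
  have hleft : EqOn h (affThrough u (ω 0).2 (ω 1).1 (ω 1).2) I := fun t ht => by
    simpa only [hx₀, hy₀, hx₁, hy₁] using hext.1 t (hx₀ ▸ ht.2)
  calc ENNReal.ofReal |(ω 0).2 / 4 - ((ω 1).2 - (ω 0).2) / ((ω 1).1 - u) / 32|
      = ‖∫ t in I, affThrough u (ω 0).2 (ω 1).1 (ω 1).2 t‖ₑ := by
        rw [Real.enorm_eq_ofReal_abs, restrict_Ico_eq_restrict_Ioc,
          ← intervalIntegral.integral_of_le (by linarith), integral_affThrough_sub_left]
        ring_nf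
    _ ≤ ∫⁻ t in I, ‖affThrough u (ω 0).2 (ω 1).1 (ω 1).2 t‖ₑ :=
        enorm_integral_le_lintegral_enorm _
    _ ≤ Lp (fun _ => 0) ν 1 h := by
        simp only [Real.enorm_eq_ofReal_abs]
        exact setLIntegral_ofReal_abs_le_Lp hint hmean measurableSet_Ico hI
          (by unfold affThrough; fun_prop) hleft

theorem lintegral_leftBound_eq_top {ν : Measure ℝ} [SFinite ν] [ν.IsNegInvariant]
    [NullSingletonClass ν] [NeZero ν] {z₀ : ℝ × ℝ} (h₁ : 4⁻¹ < z₀.1) (h₂ : z₀.1 < 2⁻¹) :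
    ∫⁻ z₁, leftBound z₀ z₁ ∂unif.prod ν = ∞ := by
  set m := ∫⁻ e, ENNReal.ofReal |e| ∂ν
  have hm : m ≠ 0 := (lintegral_ofReal_abs_pos ν).ne'
  have hfiber : ∀ u ∈ Ioo z₀.1 2⁻¹,
      m * ENNReal.ofReal (32⁻¹ * (u - z₀.1)⁻¹) ≤ ∫⁻ e, leftBound z₀ (u, e) ∂ν := by
    intro u hu
    have hd : 0 < u - z₀.1 := sub_pos.2 hu.1
    have hform : ∀ e, leftBound z₀ (u, e) = ENNReal.ofReal |(8 * (u - z₀.1) + 1) * z₀.2 - e|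
        * ENNReal.ofReal (32⁻¹ * (u - z₀.1)⁻¹) := fun e => by
      rw [leftBound, if_pos ⟨h₁, hu.1, hu.2⟩, ← ENNReal.ofReal_mul (abs_nonneg _),
        ← abs_of_pos (by positivity : 0 < 32⁻¹ * (u - z₀.1)⁻¹), ← abs_mul]
      congr 2
      field_simp
      ring
    simp_rw [hform]
    rw [lintegral_mul_const _ (by fun_prop)]
    gcongr
    exact lintegral_ofReal_abs_le_lintegral_ofReal_abs_sub ν _
  have hI : Ioo z₀.1 2⁻¹ ⊆ Icc 0 1 := fun t ht => ⟨by linarith [ht.1], by linarith [ht.2]⟩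
  rw [eq_top_iff]
  calc ∞ = m * ENNReal.ofReal 32⁻¹ * ∫⁻ u in Ioo z₀.1 2⁻¹, ENNReal.ofReal (u - z₀.1)⁻¹ := by
        rw [setLIntegral_Ioo_inv_sub_eq_top h₂, ENNReal.mul_top]
        exact mul_ne_zero hm (by norm_num)
    _ = ∫⁻ u in Ioo z₀.1 2⁻¹, m * ENNReal.ofReal (32⁻¹ * (u - z₀.1)⁻¹) ∂unif := by
        rw [unif_restrict_of_subset hI, ← lintegral_const_mul _ (by fun_prop)]
        simp_rw [ENNReal.ofReal_mul (by norm_num : (0 : ℝ) ≤ 32⁻¹), mul_assoc]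
    _ ≤ ∫⁻ u in Ioo z₀.1 2⁻¹, ∫⁻ e, leftBound z₀ (u, e) ∂ν ∂unif :=
        setLIntegral_mono' measurableSet_Ioo hfiber
    _ ≤ ∫⁻ u, ∫⁻ e, leftBound z₀ (u, e) ∂ν ∂unif := setLIntegral_le_lintegral _ _
    _ = ∫⁻ z₁, leftBound z₀ z₁ ∂unif.prod ν :=
        (lintegral_prod _ (measurable_leftBound.comp measurable_prodMk_left).aemeasurable).symm

theorem lintegral_lintegral_leftBound_eq_top {ν : Measure ℝ} [IsProbabilityMeasure ν]
    [ν.IsNegInvariant] [NullSingletonClass ν] :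
    ∫⁻ z₀, ∫⁻ z₁, leftBound z₀ z₁ ∂unif.prod ν ∂unif.prod ν = ∞ := by
  have hsub : Ioo 4⁻¹ 2⁻¹ ×ˢ univ ⊆ {z₀ | ∫⁻ z₁, leftBound z₀ z₁ ∂unif.prod ν = ∞} :=
    fun z hz => lintegral_leftBound_eq_top hz.1.1 hz.1.2
  exact lintegral_eq_top_of_measure_eq_top_ne_zero
    measurable_leftBound.lintegral_prod_right'.aemeasurable
    fun h => unif_prod_Ioo_ne_zero (by norm_num) (by norm_num) (by norm_num)
      (measure_mono_null hsub h)

theorem lintegral_Lp_extSpline_eq_top {ν : Measure ℝ} [IsProbabilityMeasure ν]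
    [ν.IsNegInvariant] [NullSingletonClass ν] (hint : Integrable (fun y => y) ν) {n : ℕ}
    (hn : 2 ≤ n) {F : (Fin n → ℝ × ℝ) → ℝ → ℝ}
    (hF : ∀ᵐ ω ∂Pn ν n, ∃ x y, SortedVersion (sampleOf (fun _ => 0) ω) x y ∧
      IsExtSpline n x y (F ω)) :
    ∫⁻ ω, Lp (fun _ => 0) ν 1 (F ω) ∂Pn ν n = ∞ := by
  obtain ⟨k, rfl⟩ : ∃ k, n = k + 2 := ⟨n - 2, by omega⟩
  have hmean : ∫ y, y ∂ν = 0 := by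
    have := integral_neg_eq_self (fun y : ℝ => y) ν
    rw [integral_neg] at this
    linarith
  set far : Set (Fin k → ℝ × ℝ) := univ.pi fun _ => Ioo 2⁻¹ 1 ×ˢ univ
  have hfar : MeasurableSet far := .univ_pi fun _ => measurableSet_Ioo.prod .univ
  have hle : ∀ᵐ ω ∂Pn ν (k + 2),
      leftBound (ω 0) (ω 1) * far.indicator 1 (Fin.tail (Fin.tail ω)) ≤
        Lp (fun _ => 0) ν 1 (F ω) := by
    filter_upwards [hF] with ω ⟨x, y, hsort, hext⟩
    by_cases hω : Fin.tail (Fin.tail ω) ∈ far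
    · rw [indicator_of_mem hω, Pi.one_apply, mul_one]
      exact leftBound_le_Lp hint hmean (fun j => (hω j (mem_univ _)).1.1) hsort hext
    · simp [indicator_of_notMem hω]
  have hfar_pos : (Measure.pi fun _ => unif.prod ν) far ≠ 0 := by
    rw [Measure.pi_pi]
    exact Finset.prod_ne_zero_iff.2 fun _ _ =>
      unif_prod_Ioo_ne_zero (by norm_num) (by norm_num) le_rfl
  refine top_le_iff.1 (le_trans ?_ (lintegral_mono_ae hle))
  rw [Pn, lintegral_pi_fin_add_two _ measurable_leftBound (measurable_one.indicator hfar),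
    lintegral_lintegral_leftBound_eq_top, lintegral_indicator_one hfar, ENNReal.top_mul hfar_pos]

/-- **Proposition (the extended linear spline is not tempered in expectation).**
For `f* ≡ 0` and Gaussian noise `ε ~ N(0,σ²)`, `σ > 0`, for any (a.e. defined) selection
`F` of the extended linear-spline interpolator `ĥ_S` of the sample `S ~ D^n` (`n ≥ 2`),
the expected `L₁` population loss is infinite: `E_S [L₁(ĥ_S)] = ∞`. -/
theorem ext_spline_expected_L1_infinite (σ : ℝ) (hσ : 0 < σ) (n : ℕ) (hn : 2 ≤ n)
    (F : (Fin n → ℝ × ℝ) → (ℝ → ℝ))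
    (hF : ∀ᵐ ω ∂(Pn (ProbabilityTheory.gaussianReal 0 ⟨σ ^ 2, sq_nonneg σ⟩) n),
      ∃ x y, SortedVersion (sampleOf (fun _ => 0) ω) x y ∧ IsExtSpline n x y (F ω)) :
    ∫⁻ ω, Lp (fun _ => 0) (ProbabilityTheory.gaussianReal 0 ⟨σ ^ 2, sq_nonneg σ⟩) 1 (F ω)
        ∂(Pn (ProbabilityTheory.gaussianReal 0 ⟨σ ^ 2, sq_nonneg σ⟩) n) = ⊤ := by
  have hv : (⟨σ ^ 2, sq_nonneg σ⟩ : ℝ≥0) ≠ 0 := fun h =>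
    hσ.ne' (pow_eq_zero_iff two_ne_zero |>.1 (congrArg NNReal.toReal h))
  have : (gaussianReal 0 ⟨σ ^ 2, sq_nonneg σ⟩).IsNegInvariant := isNegInvariant_gaussianReal_zero _
  have := nullSingletonClass_gaussianReal (μ := 0) hv
  exact lintegral_Lp_extSpline_eq_top ((memLp_id_gaussianReal 1).integrable le_rfl) hn hF

end
end

section
/- Let p ≥ 1, let f*: ℝ → ℝ be Lipschitz, and let D be the distribution on [0,1]×ℝ with x ~ Uniform([0,1]) and y = f*(x) + ε, where ε is noise independent of x with E|ε|^p < ∞. For S ~ D^n with sorted points 0 < x₁ < ... < xₙ < 1, let ĝ_S be the linear-spline interpolator and define the endpoint risks R₀ := ∫₀^{x₁} |ĝ_S(x) − f*(x)|^p dx and Rₙ := ∫_{xₙ}^1 |ĝ_S(x) − f*(x)|^p dx. Then for every γ > 0, lim_{n→∞} Pr_S[ R₀ + Rₙ ≤ γ ] = 1. -/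
open MeasureTheory ProbabilityTheory Filter Set
open scoped ENNReal NNReal

noncomputable section

instance unif_prob : IsProbabilityMeasure unif := ⟨by simp [unif, Real.volume_Icc]⟩

instance pn_prob (ν : Measure ℝ) [IsProbabilityMeasure ν] (n : ℕ) :
    IsProbabilityMeasure (Pn ν n) := by
  unfold Pn; infer_instance

lemma pn_cyl (ν : Measure ℝ) [IsProbabilityMeasure ν] {n : ℕ} (i : Fin n) (B : Set (ℝ × ℝ)) :
    Pn ν n {ω | ω i ∈ B} = (unif.prod ν) B := by
  classical
  have hset : {ω : Fin n → ℝ × ℝ | ω i ∈ B} =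
      Set.pi Set.univ (Function.update (fun _ => Set.univ) i B) := by
    ext ω
    simp only [Set.mem_pi, Set.mem_univ, forall_true_left, Set.mem_setOf_eq]
    constructor
    · intro h j
      rcases eq_or_ne j i with rfl | hj
      · simpa using h
      · simp [Function.update_of_ne hj]
    · intro h
      simpa using h i
  rw [hset, Pn, Measure.pi_pi,
    Fintype.prod_eq_single i (fun j hj => by simp [Function.update_of_ne hj, measure_univ])]
  simp

lemma pn_map_eval (ν : Measure ℝ) [IsProbabilityMeasure ν] {n : ℕ} (i : Fin n) :
    (Pn ν n).map (fun ω => ω i) = unif.prod ν := by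
  apply Measure.ext
  intro s hs
  rw [Measure.map_apply (measurable_pi_apply i) hs]
  exact pn_cyl ν i s

lemma unif_singleton (c : ℝ) : unif {c} = 0 := by
  rw [unif, Measure.restrict_apply' measurableSet_Icc]
  exact measure_mono_null Set.inter_subset_left (Real.volume_singleton)

lemma prod_line_null (ν : Measure ℝ) [IsProbabilityMeasure ν] (c : ℝ) :
    (unif.prod ν) {a : ℝ × ℝ | a.1 = c} = 0 := by
  have h : {a : ℝ × ℝ | a.1 = c} = ({c} : Set ℝ) ×ˢ (Set.univ : Set ℝ) := by
    ext a
    simp only [Set.mem_setOf_eq, Set.mem_prod, Set.mem_singleton_iff, Set.mem_univ, and_true]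
  rw [h, Measure.prod_prod, unif_singleton, zero_mul]

lemma pn_diag_null (ν : Measure ℝ) [IsProbabilityMeasure ν] {n : ℕ} (i j : Fin n)
    (hij : i ≠ j) : Pn ν n {ω | (ω i).1 = (ω j).1} = 0 := by
  classical
  have hn : 0 < n := i.pos
  obtain ⟨m, rfl⟩ : ∃ m, n = m + 1 := ⟨n - 1, by omega⟩
  obtain ⟨k, hk⟩ := Fin.exists_succAbove_eq hij.symm
  set e := MeasurableEquiv.piFinSuccAbove (fun _ : Fin (m+1) => ℝ × ℝ) i with he
  have hmp := measurePreserving_piFinSuccAbove (fun _ : Fin (m+1) => (unif.prod ν)) i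
  set s : Set ((ℝ×ℝ) × (Fin m → ℝ×ℝ)) := {z | z.1.1 = (z.2 k).1} with hs'
  have hs : MeasurableSet s := by
    apply measurableSet_eq_fun
    · exact measurable_fst.comp measurable_fst
    · exact measurable_fst.comp ((measurable_pi_apply k).comp measurable_snd)
  have hpre : {ω : Fin (m+1) → ℝ×ℝ | (ω i).1 = (ω j).1} = e ⁻¹' s := by
    ext ω
    simp only [Set.mem_preimage, Set.mem_setOf_eq, he, hs',
      MeasurableEquiv.piFinSuccAbove_apply, Fin.insertNthEquiv_symm_apply, Fin.removeNth, hk]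
  rw [Pn, hpre, hmp.measure_preimage hs.nullMeasurableSet]
  rw [Measure.prod_apply_symm hs]
  have hz : ∀ y : Fin m → ℝ×ℝ, (unif.prod ν) ((fun x => (x, y)) ⁻¹' s) = 0 := by
    intro y
    have : ((fun x => (x, y)) ⁻¹' s) = {a : ℝ×ℝ | a.1 = (y k).1} := rfl
    rw [this, prod_line_null]
  simp only [hz, lintegral_zero]

lemma pn_distinct_null (ν : Measure ℝ) [IsProbabilityMeasure ν] {n : ℕ} :
    Pn ν n {ω | ¬ ∀ i j : Fin n, i ≠ j → (ω i).1 ≠ (ω j).1} = 0 := by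
  apply measure_mono_null
    (t := ⋃ (i : Fin n), ⋃ (j : Fin n), ⋃ (_ : i ≠ j), {ω : Fin n → ℝ×ℝ | (ω i).1 = (ω j).1})
  · intro ω h
    push_neg at h
    obtain ⟨i, j, hij, h⟩ := h
    simp only [Set.mem_iUnion]
    exact ⟨i, j, hij, h⟩
  · exact measure_iUnion_null fun i => measure_iUnion_null fun j =>
      measure_iUnion_null fun hij => pn_diag_null ν i j hij

lemma pn_ioo_null (ν : Measure ℝ) [IsProbabilityMeasure ν] {n : ℕ} :
    Pn ν n {ω | ¬ ∀ i : Fin n, (ω i).1 ∈ Set.Ioo (0:ℝ) 1} = 0 := by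
  apply measure_mono_null
    (t := ⋃ (i : Fin n), {ω : Fin n → ℝ×ℝ | ω i ∈ {a : ℝ×ℝ | a.1 ∉ Set.Ioo (0:ℝ) 1}})
  · intro ω h
    push_neg at h
    obtain ⟨i, h⟩ := h
    simp only [Set.mem_iUnion]
    exact ⟨i, h⟩
  · apply measure_iUnion_null
    intro i
    rw [pn_cyl]
    have h : {a : ℝ×ℝ | a.1 ∉ Set.Ioo (0:ℝ) 1} = (Set.Ioo (0:ℝ) 1)ᶜ ×ˢ (Set.univ : Set ℝ) := by
      ext a; simp [Set.mem_prod]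
    rw [h, Measure.prod_prod, measure_univ, mul_one]
    have h2 : (Set.Ioo (0:ℝ) 1)ᶜ ∩ Set.Icc 0 1 = {0, 1} := by
      rw [← Set.Icc_diff_Ioo_same (by norm_num : (0:ℝ) ≤ 1)]
      ext a
      simp only [Set.mem_inter_iff, Set.mem_compl_iff, Set.mem_diff]
      tauto
    rw [unif, Measure.restrict_apply' measurableSet_Icc, h2]
    have : ({0, 1} : Set ℝ).Finite := (Set.finite_singleton (1:ℝ)).insert 0
    exact this.measure_zero _

lemma pn_tail_left (ν : Measure ℝ) [IsProbabilityMeasure ν] {n : ℕ} (δ : ℝ)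
    (hδ0 : 0 ≤ δ) (hδ1 : δ ≤ 1) :
    Pn ν n {ω | ∀ i : Fin n, ¬ (ω i).1 < δ} = (ENNReal.ofReal (1 - δ))^n := by
  have hset : {ω : Fin n → ℝ×ℝ | ∀ i, ¬ (ω i).1 < δ} =
      Set.pi Set.univ (fun _ => {a : ℝ×ℝ | δ ≤ a.1}) := by
    ext ω; simp [not_lt]
  rw [hset, Pn, Measure.pi_pi]
  have h : (unif.prod ν) {a : ℝ×ℝ | δ ≤ a.1} = ENNReal.ofReal (1 - δ) := by
    have h1 : {a : ℝ×ℝ | δ ≤ a.1} = Set.Ici δ ×ˢ (Set.univ : Set ℝ) := by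
      ext a; simp [Set.mem_prod]
    rw [h1, Measure.prod_prod, measure_univ, mul_one, unif,
      Measure.restrict_apply' measurableSet_Icc]
    have h2 : Set.Ici δ ∩ Set.Icc 0 1 = Set.Icc δ 1 := by
      ext a
      simp only [Set.mem_inter_iff, Set.mem_Ici, Set.mem_Icc]
      constructor
      · rintro ⟨h, _, h2⟩; exact ⟨h, h2⟩
      · rintro ⟨h, h2⟩; exact ⟨h, le_trans hδ0 h, h2⟩
    rw [h2, Real.volume_Icc]
  simp [h, Finset.prod_const, Finset.card_univ]

lemma pn_tail_right (ν : Measure ℝ) [IsProbabilityMeasure ν] {n : ℕ} (δ : ℝ)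
    (hδ0 : 0 ≤ δ) (hδ1 : δ ≤ 1) :
    Pn ν n {ω | ∀ i : Fin n, ¬ 1 - δ < (ω i).1} = (ENNReal.ofReal (1 - δ))^n := by
  have hset : {ω : Fin n → ℝ×ℝ | ∀ i, ¬ 1 - δ < (ω i).1} =
      Set.pi Set.univ (fun _ => {a : ℝ×ℝ | a.1 ≤ 1 - δ}) := by
    ext ω; simp [not_lt]
  rw [hset, Pn, Measure.pi_pi]
  have h : (unif.prod ν) {a : ℝ×ℝ | a.1 ≤ 1 - δ} = ENNReal.ofReal (1 - δ) := by
    have h1 : {a : ℝ×ℝ | a.1 ≤ 1 - δ} = Set.Iic (1 - δ) ×ˢ (Set.univ : Set ℝ) := by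
      ext a; simp [Set.mem_prod]
    rw [h1, Measure.prod_prod, measure_univ, mul_one, unif,
      Measure.restrict_apply' measurableSet_Icc]
    have h2 : Set.Iic (1 - δ) ∩ Set.Icc 0 1 = Set.Icc 0 (1 - δ) := by
      ext a
      simp only [Set.mem_inter_iff, Set.mem_Iic, Set.mem_Icc]
      constructor
      · rintro ⟨h, h0, _⟩; exact ⟨h0, h⟩
      · rintro ⟨h0, h⟩; exact ⟨h, h0, by linarith⟩
    rw [h2, Real.volume_Icc, sub_zero]
  simp [h, Finset.prod_const, Finset.card_univ]

def Fterm (p δ : ℝ) (K : ℝ≥0) (a : ℝ × ℝ) : ℝ≥0∞ :=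
  ((if a.1 < δ then 1 else 0) + (if 1 - δ < a.1 then 1 else 0)) *
    ENNReal.ofReal δ * ENNReal.ofReal ((|a.2| + (K : ℝ)) ^ p)

def Zsum (p δ : ℝ) (K : ℝ≥0) {n : ℕ} (ω : Fin n → ℝ × ℝ) : ℝ≥0∞ :=
  ∑ i, Fterm p δ K (ω i)

lemma measurable_noise (p : ℝ) (K : ℝ≥0) :
    Measurable (fun e : ℝ => ENNReal.ofReal ((|e| + (K : ℝ)) ^ p)) :=
  ENNReal.measurable_ofReal.comp ((measurable_id.abs.add_const _).pow measurable_const)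

lemma measurable_Fterm (p δ : ℝ) (K : ℝ≥0) : Measurable (Fterm p δ K) := by
  apply Measurable.mul
  · apply Measurable.mul
    · apply Measurable.add
      · exact Measurable.ite (measurableSet_lt measurable_fst measurable_const)
          measurable_const measurable_const
      · exact Measurable.ite (measurableSet_lt measurable_const measurable_fst)
          measurable_const measurable_const
    · exact measurable_const
  · exact (measurable_noise p K).comp measurable_snd

lemma measurable_Zsum (p δ : ℝ) (K : ℝ≥0) {n : ℕ} :
    Measurable (fun ω : Fin n → ℝ × ℝ => Zsum p δ K ω) := by
  apply Finset.measurable_sum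
  intro i _
  exact (measurable_Fterm p δ K).comp (measurable_pi_apply i)

lemma lintegral_Fterm (ν : Measure ℝ) [IsProbabilityMeasure ν] (p δ : ℝ) (K : ℝ≥0)
    (hδ0 : 0 ≤ δ) (hδ1 : δ ≤ 1) :
    (∫⁻ a, Fterm p δ K a ∂(unif.prod ν)) =
      2 * ENNReal.ofReal δ * ENNReal.ofReal δ *
        ∫⁻ e, ENNReal.ofReal ((|e| + (K:ℝ)) ^ p) ∂ν := by
  have hG : Measurable (fun x : ℝ =>
      ((if x < δ then (1:ℝ≥0∞) else 0) + (if 1 - δ < x then 1 else 0)) * ENNReal.ofReal δ) := by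
    apply Measurable.mul ?_ measurable_const
    apply Measurable.add
    · exact Measurable.ite (measurableSet_lt measurable_id measurable_const)
        measurable_const measurable_const
    · exact Measurable.ite (measurableSet_lt measurable_const measurable_id)
        measurable_const measurable_const
  have key : (∫⁻ a, Fterm p δ K a ∂(unif.prod ν)) =
      (∫⁻ x, ((if x < δ then (1:ℝ≥0∞) else 0) + (if 1 - δ < x then 1 else 0)) *
          ENNReal.ofReal δ ∂unif) * ∫⁻ e, ENNReal.ofReal ((|e| + (K:ℝ)) ^ p) ∂ν :=
    lintegral_prod_mul hG.aemeasurable (measurable_noise p K).aemeasurable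
  rw [key]
  congr 1
  rw [lintegral_mul_const _ (by
    apply Measurable.add
    · exact Measurable.ite (measurableSet_lt measurable_id measurable_const)
        measurable_const measurable_const
    · exact Measurable.ite (measurableSet_lt measurable_const measurable_id)
        measurable_const measurable_const)]
  have h1 : (∫⁻ x, ((if x < δ then (1:ℝ≥0∞) else 0) + (if 1 - δ < x then 1 else 0)) ∂unif)
      = unif (Set.Iio δ) + unif (Set.Ioi (1 - δ)) := by
    rw [lintegral_add_left (by
      exact Measurable.ite (measurableSet_lt measurable_id measurable_const)
        measurable_const measurable_const)]
    congr 1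
    · have : ∀ x : ℝ, (if x < δ then (1:ℝ≥0∞) else 0) =
          Set.indicator (Set.Iio δ) (fun _ => 1) x := by
        intro x; simp [Set.indicator_apply, Set.mem_Iio]
      simp_rw [this]
      rw [lintegral_indicator measurableSet_Iio]
      simp
    · have : ∀ x : ℝ, (if 1 - δ < x then (1:ℝ≥0∞) else 0) =
          Set.indicator (Set.Ioi (1-δ)) (fun _ => 1) x := by
        intro x; simp [Set.indicator_apply, Set.mem_Ioi]
      simp_rw [this]
      rw [lintegral_indicator measurableSet_Ioi]
      simp
  rw [h1]
  have h2 : unif (Set.Iio δ) = ENNReal.ofReal δ := by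
    rw [unif, Measure.restrict_apply' measurableSet_Icc]
    have : Set.Iio δ ∩ Set.Icc 0 1 = Set.Ico 0 δ := by
      ext a
      simp only [Set.mem_inter_iff, Set.mem_Iio, Set.mem_Icc, Set.mem_Ico]
      constructor
      · rintro ⟨h, h0, _⟩; exact ⟨h0, h⟩
      · rintro ⟨h0, h⟩; exact ⟨h, h0, by linarith⟩
    rw [this, Real.volume_Ico, sub_zero]
  have h3 : unif (Set.Ioi (1 - δ)) = ENNReal.ofReal δ := by
    rw [unif, Measure.restrict_apply' measurableSet_Icc]
    have : Set.Ioi (1-δ) ∩ Set.Icc 0 1 = Set.Ioc (1-δ) 1 := by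
      ext a
      simp only [Set.mem_inter_iff, Set.mem_Ioi, Set.mem_Icc, Set.mem_Ioc]
      constructor
      · rintro ⟨h, _, h1'⟩; exact ⟨h, h1'⟩
      · rintro ⟨h, h1'⟩; exact ⟨h, by linarith, h1'⟩
    rw [this, Real.volume_Ioc]
    congr 1
    ring
  rw [h2, h3, two_mul]

lemma lintegral_Zsum (ν : Measure ℝ) [IsProbabilityMeasure ν] (p δ : ℝ) (K : ℝ≥0) (n : ℕ)
    (hδ0 : 0 ≤ δ) (hδ1 : δ ≤ 1) :
    (∫⁻ ω, Zsum p δ K ω ∂(Pn ν n)) =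
      (n : ℝ≥0∞) * (2 * ENNReal.ofReal δ * ENNReal.ofReal δ *
        ∫⁻ e, ENNReal.ofReal ((|e| + (K:ℝ)) ^ p) ∂ν) := by
  unfold Zsum
  rw [lintegral_finset_sum (f := fun (i : Fin n) (ω : Fin n → ℝ × ℝ) => Fterm p δ K (ω i))
    Finset.univ (fun i _ => (measurable_Fterm p δ K).comp (measurable_pi_apply i))]
  have h : ∀ i : Fin n, (∫⁻ ω : Fin n → ℝ×ℝ, Fterm p δ K (ω i) ∂(Pn ν n)) =
      ∫⁻ a, Fterm p δ K a ∂(unif.prod ν) := by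
    intro i
    rw [← pn_map_eval ν i, lintegral_map (measurable_Fterm p δ K) (measurable_pi_apply i)]
  simp only [h, Finset.sum_const, Finset.card_univ, Fintype.card_fin, nsmul_eq_mul]
  rw [lintegral_Fterm ν p δ K hδ0 hδ1]

lemma pn_Zsum_tail (ν : Measure ℝ) [IsProbabilityMeasure ν] (p δ : ℝ) (K : ℝ≥0) (n : ℕ)
    (hδ0 : 0 ≤ δ) (hδ1 : δ ≤ 1) (γ' : ℝ≥0∞) (hγ0 : γ' ≠ 0) (hγt : γ' ≠ ⊤) :
    Pn ν n {ω | ¬ Zsum p δ K ω ≤ γ'} ≤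
      (n : ℝ≥0∞) * (2 * ENNReal.ofReal δ * ENNReal.ofReal δ *
        ∫⁻ e, ENNReal.ofReal ((|e| + (K:ℝ)) ^ p) ∂ν) / γ' := by
  have hsub : {ω : Fin n → ℝ×ℝ | ¬ Zsum p δ K ω ≤ γ'} ⊆ {ω | γ' ≤ Zsum p δ K ω} :=
    fun ω h => le_of_lt (not_le.1 h)
  apply le_trans (measure_mono hsub)
  rw [ENNReal.le_div_iff_mul_le (Or.inl hγ0) (Or.inl hγt)]
  rw [mul_comm]
  calc γ' * Pn ν n {ω | γ' ≤ Zsum p δ K ω} ≤ ∫⁻ ω, Zsum p δ K ω ∂(Pn ν n) :=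
        mul_meas_ge_le_lintegral₀ (measurable_Zsum p δ K).aemeasurable γ'
    _ = _ := lintegral_Zsum ν p δ K n hδ0 hδ1

lemma noise_moment_ne_top (ν : Measure ℝ) [IsProbabilityMeasure ν] (p : ℝ) (hp : 1 ≤ p)
    (K : ℝ≥0) (hmom : (∫⁻ e, ENNReal.ofReal (|e| ^ p) ∂ν) ≠ ⊤) :
    (∫⁻ e, ENNReal.ofReal ((|e| + (K:ℝ)) ^ p) ∂ν) ≠ ⊤ := by
  have hppos : (0:ℝ) ≤ p := le_trans zero_le_one hp
  have hpt : ∀ e : ℝ, ENNReal.ofReal ((|e| + (K:ℝ)) ^ p) ≤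
      ENNReal.ofReal ((2:ℝ) ^ p) * (ENNReal.ofReal (|e| ^ p) + ENNReal.ofReal ((K:ℝ) ^ p)) := by
    intro e
    have hb : |e| + (K:ℝ) ≤ 2 * max |e| (K:ℝ) := by
      have h1 := le_max_left |e| (K:ℝ)
      have h2 := le_max_right |e| (K:ℝ)
      linarith
    have hmax0 : (0:ℝ) ≤ max |e| (K:ℝ) := le_trans (abs_nonneg e) (le_max_left _ _)
    have h1 : (|e| + (K:ℝ)) ^ p ≤ (2 * max |e| (K:ℝ)) ^ p :=
      Real.rpow_le_rpow (by positivity) hb hppos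
    have h2 : (2 * max |e| (K:ℝ)) ^ p = 2 ^ p * max |e| (K:ℝ) ^ p :=
      Real.mul_rpow (by norm_num) hmax0
    have h3 : max |e| (K:ℝ) ^ p ≤ |e| ^ p + (K:ℝ) ^ p := by
      rcases max_cases |e| (K:ℝ) with ⟨hm, _⟩ | ⟨hm, _⟩ <;> rw [hm]
      · exact le_add_of_nonneg_right (Real.rpow_nonneg K.coe_nonneg p)
      · exact le_add_of_nonneg_left (Real.rpow_nonneg (abs_nonneg e) p)
    have h4 : (|e| + (K:ℝ)) ^ p ≤ 2 ^ p * (|e| ^ p + (K:ℝ) ^ p) := by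
      calc (|e| + (K:ℝ)) ^ p ≤ 2 ^ p * max |e| (K:ℝ) ^ p := by rw [← h2]; exact h1
        _ ≤ 2 ^ p * (|e| ^ p + (K:ℝ) ^ p) :=
          mul_le_mul_of_nonneg_left h3 (Real.rpow_nonneg (by norm_num) p)
    calc ENNReal.ofReal ((|e| + (K:ℝ)) ^ p) ≤
        ENNReal.ofReal (2 ^ p * (|e| ^ p + (K:ℝ) ^ p)) := ENNReal.ofReal_le_ofReal h4
      _ = ENNReal.ofReal ((2:ℝ) ^ p) * (ENNReal.ofReal (|e| ^ p) + ENNReal.ofReal ((K:ℝ) ^ p)) := by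
          rw [ENNReal.ofReal_mul (Real.rpow_nonneg (by norm_num) p),
            ENNReal.ofReal_add (Real.rpow_nonneg (abs_nonneg e) p)
              (Real.rpow_nonneg K.coe_nonneg p)]
  have hle : (∫⁻ e, ENNReal.ofReal ((|e| + (K:ℝ)) ^ p) ∂ν) ≤
      ENNReal.ofReal ((2:ℝ) ^ p) *
        ((∫⁻ e, ENNReal.ofReal (|e| ^ p) ∂ν) + ENNReal.ofReal ((K:ℝ) ^ p)) := by
    calc (∫⁻ e, ENNReal.ofReal ((|e| + (K:ℝ)) ^ p) ∂ν) ≤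
        ∫⁻ e, ENNReal.ofReal ((2:ℝ) ^ p) *
          (ENNReal.ofReal (|e| ^ p) + ENNReal.ofReal ((K:ℝ) ^ p)) ∂ν := lintegral_mono hpt
      _ = ENNReal.ofReal ((2:ℝ) ^ p) *
          ∫⁻ e, (ENNReal.ofReal (|e| ^ p) + ENNReal.ofReal ((K:ℝ) ^ p)) ∂ν :=
        lintegral_const_mul' _ _ ENNReal.ofReal_ne_top
      _ = ENNReal.ofReal ((2:ℝ) ^ p) *
          ((∫⁻ e, ENNReal.ofReal (|e| ^ p) ∂ν) + ENNReal.ofReal ((K:ℝ) ^ p)) := by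
        rw [lintegral_add_right _ measurable_const, lintegral_const, measure_univ, mul_one]
  exact ne_top_of_le_ne_top
    (ENNReal.mul_ne_top ENNReal.ofReal_ne_top
      (ENNReal.add_ne_top.2 ⟨hmom, ENNReal.ofReal_ne_top⟩)) hle

lemma tendsto_exp_tail :
    Tendsto (fun n : ℕ => (ENNReal.ofReal (1 - (n:ℝ) ^ (-(3/4) : ℝ)))^n) atTop (nhds 0) := by
  have hup : Tendsto (fun n : ℕ => ENNReal.ofReal (Real.exp (-(n:ℝ) ^ ((1:ℝ)/4)))) atTop (nhds 0) := by
    rw [← ENNReal.ofReal_zero]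
    apply ENNReal.tendsto_ofReal
    apply Real.tendsto_exp_atBot.comp
    apply tendsto_neg_atTop_atBot.comp
    exact (tendsto_rpow_atTop (by norm_num)).comp tendsto_natCast_atTop_atTop
  apply tendsto_of_tendsto_of_tendsto_of_le_of_le' tendsto_const_nhds hup
  · exact Eventually.of_forall (fun n => zero_le)
  · filter_upwards [eventually_ge_atTop 1] with n hn
    have hn0 : (0:ℝ) < n := by exact_mod_cast hn
    set δ := (n:ℝ) ^ (-(3/4):ℝ) with hδ
    have hδ0 : 0 < δ := Real.rpow_pos_of_pos hn0 _
    have hδ1 : δ ≤ 1 := Real.rpow_le_one_of_one_le_of_nonpos (by exact_mod_cast hn) (by norm_num)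
    rw [← ENNReal.ofReal_pow (by linarith)]
    apply ENNReal.ofReal_le_ofReal
    have step1 : (1 - δ)^n ≤ (Real.exp (-δ))^n :=
      pow_le_pow_left₀ (by linarith) (by linarith [Real.add_one_le_exp (-δ)]) n
    have step2 : (Real.exp (-δ))^n = Real.exp (-((n:ℝ) * δ)) := by
      rw [← Real.exp_nat_mul]
      congr 1
      ring
    have step3 : (n:ℝ) * δ = (n:ℝ) ^ ((1:ℝ)/4) := by
      have h : (n:ℝ) ^ ((1:ℝ)/4) = (n:ℝ) ^ ((1:ℝ) + -(3/4)) := by norm_num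
      rw [h, Real.rpow_add hn0, Real.rpow_one, hδ]
    calc (1-δ)^n ≤ (Real.exp (-δ))^n := step1
      _ = Real.exp (-((n:ℝ) * δ)) := step2
      _ = Real.exp (-(n:ℝ)^((1:ℝ)/4)) := by rw [step3]

lemma tendsto_half_tail :
    Tendsto (fun n : ℕ => ENNReal.ofReal ((n:ℝ) ^ (-(1/2) : ℝ))) atTop (nhds 0) := by
  rw [← ENNReal.ofReal_zero]
  apply ENNReal.tendsto_ofReal
  exact (tendsto_rpow_neg_atTop (by norm_num)).comp tendsto_natCast_atTop_atTop

lemma exists_spline (n : ℕ) (hn : 1 ≤ n) (S : Fin n → ℝ × ℝ)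
    (hinj : Function.Injective fun i => (S i).1) :
    ∃ x y g, SortedVersion S x y ∧ IsLinSpline n x y g ∧ (∀ t, t ≤ x 0 → g t = y 0) := by
  classical
  have hn' : n - 1 < n := Nat.sub_lt hn one_pos
  set f : Fin n → ℝ := fun i => (S i).1 with hf
  set σ := Tuple.sort f with hσ
  have hmono : Monotone (f ∘ σ) := Tuple.monotone_sort f
  have hsm : StrictMono (f ∘ σ) := hmono.strictMono_of_injective (hinj.comp σ.injective)
  set idx : ℕ → Fin n := fun k => ⟨min k (n-1), lt_of_le_of_lt (min_le_right _ _) hn'⟩ with hidxdef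
  set x : ℕ → ℝ := fun k => (S (σ (idx k))).1 with hx
  set y : ℕ → ℝ := fun k => (S (σ (idx k))).2 with hy
  have hidx : ∀ i : Fin n, idx (i : ℕ) = i := by
    intro i; apply Fin.ext; simp only [hidxdef]
    omega
  have hxm : Monotone x := by
    intro a b hab
    exact hmono (by simp only [Fin.mk_le_mk, hidxdef]; omega)
  have hxs : ∀ k l, k < l → l < n → x k < x l := by
    intro k l hkl hln
    exact hsm (by simp only [Fin.mk_lt_mk, hidxdef]; omega)
  set g : ℝ → ℝ := fun t =>
    if h : ∃ i, i + 1 < n ∧ x i ≤ t ∧ t < x (i+1) then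
      affThrough (x (Nat.find h)) (y (Nat.find h)) (x (Nat.find h + 1)) (y (Nat.find h + 1)) t
    else if t < x 0 then y 0 else y (n-1) with hg
  have huniq : ∀ (t : ℝ) (i j : ℕ), i+1 < n → x i ≤ t → t < x (i+1) →
      j+1 < n → x j ≤ t → t < x (j+1) → i = j := by
    intro t i j hi hxi hti hj hxj htj
    by_contra hne
    rcases Nat.lt_or_ge i j with h | h
    · exact absurd (hxj.trans_lt hti) (not_lt.2 (hxm (by omega)))
    · have h' : j < i := by omega
      exact absurd (hxi.trans_lt htj) (not_lt.2 (hxm (by omega)))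
  have hmid : ∀ i, i + 1 < n → ∀ t ∈ Set.Ico (x i) (x (i + 1)),
      g t = affThrough (x i) (y i) (x (i + 1)) (y (i + 1)) t := by
    intro i hi t ht
    have hex : ∃ i, i + 1 < n ∧ x i ≤ t ∧ t < x (i+1) := ⟨i, hi, ht.1, ht.2⟩
    have hspec := Nat.find_spec hex
    have : Nat.find hex = i :=
      huniq t _ i hspec.1 hspec.2.1 hspec.2.2 hi ht.1 ht.2
    simp only [hg, dif_pos hex, this]
  have hleft : ∀ t, t < x 0 → g t = y 0 := by
    intro t ht
    have hnex : ¬ ∃ i, i + 1 < n ∧ x i ≤ t ∧ t < x (i+1) := by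
      rintro ⟨i, hi, hxi, -⟩
      exact absurd (lt_of_le_of_lt (hxm (Nat.zero_le i)) (hxi.trans_lt ht)) (lt_irrefl _)
    simp only [hg, dif_neg hnex, if_pos ht]
  have hright : ∀ t, x (n - 1) ≤ t → g t = y (n - 1) := by
    intro t ht
    have hnex : ¬ ∃ i, i + 1 < n ∧ x i ≤ t ∧ t < x (i+1) := by
      rintro ⟨i, hi, -, hti⟩
      exact absurd (lt_of_le_of_lt ht (hti.trans_le (hxm (by omega)))) (lt_irrefl _)
    have hnlt : ¬ t < x 0 := not_lt.2 ((hxm (Nat.zero_le _)).trans ht)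
    simp only [hg, dif_neg hnex, if_neg hnlt]
  refine ⟨x, y, g, ⟨σ, fun i => by simp [hx, hy, hidx i],
      fun i j hij => hxs i j (by exact_mod_cast hij) j.2⟩, ⟨hleft, hmid, hright⟩, ?_⟩
  intro t ht
  rcases lt_or_eq_of_le ht with ht' | rfl
  · exact hleft t ht'
  · rcases Nat.lt_or_ge 1 n with h2 | h1
    · have h01 : x 0 < x 1 := hxs 0 1 one_pos h2
      rw [hmid 0 (by omega) (x 0) ⟨le_refl _, h01⟩]
      simp [affThrough]
    · have : n = 1 := by omega
      rw [hright (x 0) (by rw [this])]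
      rw [this]

lemma incl (p : ℝ) (hp : 1 ≤ p) (fstar : ℝ → ℝ) (K : ℝ≥0) (hK : LipschitzWith K fstar)
    {n : ℕ} (δ : ℝ) (hδ0 : 0 < δ) (hδ : δ ≤ 1/2) (γ' : ℝ≥0∞)
    (ω : Fin n → ℝ × ℝ)
    (h1 : ∀ i j : Fin n, i ≠ j → (ω i).1 ≠ (ω j).1)
    (h2 : ∀ i, (ω i).1 ∈ Set.Ioo (0:ℝ) 1)
    (h3 : ∃ i, (ω i).1 < δ)
    (h4 : ∃ i, 1 - δ < (ω i).1)
    (h5 : Zsum p δ K ω ≤ γ') :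
    ∃ x y g, SortedVersion (sampleOf fstar ω) x y ∧ IsLinSpline n x y g ∧
      (∫⁻ t in Set.Ioc (0 : ℝ) (x 0), ENNReal.ofReal (|g t - fstar t| ^ p)) +
        (∫⁻ t in Set.Ioc (x (n - 1)) (1 : ℝ), ENNReal.ofReal (|g t - fstar t| ^ p)) ≤ γ' := by
  classical
  obtain ⟨iw, hiw⟩ := h3
  have hn : 1 ≤ n := iw.pos
  have hn' : n - 1 < n := Nat.sub_lt hn one_pos
  set S := sampleOf fstar ω with hS
  have hS1 : ∀ i, (S i).1 = (ω i).1 := fun i => rfl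
  have hS2 : ∀ i, (S i).2 = fstar (ω i).1 + (ω i).2 := fun i => rfl
  have hinj : Function.Injective fun i => (S i).1 := by
    intro a b hab
    by_contra hne
    exact h1 a b hne hab
  obtain ⟨x, y, g, hsv, hls, hg0⟩ := exists_spline n hn S hinj
  obtain ⟨σ, hxy, hstrict⟩ := hsv
  set z : Fin n := ⟨0, hn⟩ with hz
  set w : Fin n := ⟨n-1, hn'⟩ with hw
  set i₀ := σ z with hi₀
  set i₁ := σ w with hi₁
  have hx0 : x 0 = (ω i₀).1 := (hxy z).1
  have hy0 : y 0 = fstar (ω i₀).1 + (ω i₀).2 := (hxy z).2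
  have hxn : x (n-1) = (ω i₁).1 := (hxy w).1
  have hyn : y (n-1) = fstar (ω i₁).1 + (ω i₁).2 := (hxy w).2
  have hmin : ∀ j : Fin n, x 0 ≤ (ω j).1 := by
    intro j
    have hj : x ((σ.symm j : Fin n) : ℕ) = (ω j).1 := by
      have := (hxy (σ.symm j)).1
      rwa [Equiv.apply_symm_apply] at this
    rw [← hj]
    rcases Nat.eq_zero_or_pos ((σ.symm j : Fin n) : ℕ) with h | h
    · rw [h]
    · exact le_of_lt (by simpa using hstrict z (σ.symm j) (by simpa [hz, Fin.lt_def] using h))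
  have hmax : ∀ j : Fin n, (ω j).1 ≤ x (n-1) := by
    intro j
    have hj : x ((σ.symm j : Fin n) : ℕ) = (ω j).1 := by
      have := (hxy (σ.symm j)).1
      rwa [Equiv.apply_symm_apply] at this
    rw [← hj]
    rcases Nat.lt_or_ge ((σ.symm j : Fin n) : ℕ) (n-1) with h | h
    · exact le_of_lt (by simpa using hstrict (σ.symm j) w (by simpa [hw, Fin.lt_def] using h))
    · have : ((σ.symm j : Fin n) : ℕ) = n - 1 := by have := (σ.symm j).2; omega
      rw [this]
  have hx0δ : x 0 < δ := lt_of_le_of_lt (hmin iw) hiw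
  have hx0pos : 0 < x 0 := by rw [hx0]; exact (h2 i₀).1
  obtain ⟨iv, hiv⟩ := h4
  have hxnδ : 1 - δ < x (n-1) := lt_of_lt_of_le hiv (hmax iv)
  have hxn1 : x (n-1) < 1 := by rw [hxn]; exact (h2 i₁).2
  have hne01 : i₀ ≠ i₁ := by
    intro h
    have : (ω i₀).1 = (ω i₁).1 := by rw [h]
    rw [← hx0, ← hxn] at this
    have : x 0 < x (n-1) := by linarith
    linarith [this]
  have hppos : (0:ℝ) ≤ p := le_trans zero_le_one hp
  set c₀ : ℝ≥0∞ := ENNReal.ofReal ((|(ω i₀).2| + (K:ℝ)) ^ p) with hc₀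
  set c₁ : ℝ≥0∞ := ENNReal.ofReal ((|(ω i₁).2| + (K:ℝ)) ^ p) with hc₁
  have hb0 : ∀ t ∈ Set.Ioc (0:ℝ) (x 0), ENNReal.ofReal (|g t - fstar t| ^ p) ≤ c₀ := by
    intro t ht
    rw [hg0 t ht.2]
    apply ENNReal.ofReal_le_ofReal
    apply Real.rpow_le_rpow (abs_nonneg _) ?_ hppos
    have e1 : |y 0 - fstar (x 0)| = |(ω i₀).2| := by
      rw [hy0, hx0]; ring_nf
    have e2 : |fstar (x 0) - fstar t| ≤ (K:ℝ) * |x 0 - t| := by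
      have := hK.dist_le_mul (x 0) t
      rwa [Real.dist_eq, Real.dist_eq] at this
    have e3 : |x 0 - t| ≤ 1 := by
      rw [abs_of_nonneg (by linarith [ht.2] : (0:ℝ) ≤ x 0 - t)]
      have := ht.1
      linarith [hx0δ]
    calc |y 0 - fstar t| ≤ |y 0 - fstar (x 0)| + |fstar (x 0) - fstar t| := by
          have := abs_sub_le (y 0) (fstar (x 0)) (fstar t)
          linarith [this]
      _ ≤ |(ω i₀).2| + (K:ℝ) * 1 := by
          rw [e1]
          gcongr
          exact le_trans e2 (mul_le_mul_of_nonneg_left e3 K.coe_nonneg)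
      _ = |(ω i₀).2| + (K:ℝ) := by ring
  have hb1 : ∀ t ∈ Set.Ioc (x (n-1)) (1:ℝ), ENNReal.ofReal (|g t - fstar t| ^ p) ≤ c₁ := by
    intro t ht
    rw [hls.2.2 t (le_of_lt ht.1)]
    apply ENNReal.ofReal_le_ofReal
    apply Real.rpow_le_rpow (abs_nonneg _) ?_ hppos
    have e1 : |y (n-1) - fstar (x (n-1))| = |(ω i₁).2| := by
      rw [hyn, hxn]; ring_nf
    have e2 : |fstar (x (n-1)) - fstar t| ≤ (K:ℝ) * |x (n-1) - t| := by
      have := hK.dist_le_mul (x (n-1)) t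
      rwa [Real.dist_eq, Real.dist_eq] at this
    have e3 : |x (n-1) - t| ≤ 1 := by
      rw [abs_of_nonpos (by linarith [ht.1] : x (n-1) - t ≤ 0)]
      have := ht.2
      have := hxnδ
      linarith [hδ0]
    calc |y (n-1) - fstar t| ≤ |y (n-1) - fstar (x (n-1))| + |fstar (x (n-1)) - fstar t| := by
          have := abs_sub_le (y (n-1)) (fstar (x (n-1))) (fstar t)
          linarith [this]
      _ ≤ |(ω i₁).2| + (K:ℝ) * 1 := by
          rw [e1]
          gcongr
          exact le_trans e2 (mul_le_mul_of_nonneg_left e3 K.coe_nonneg)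
      _ = |(ω i₁).2| + (K:ℝ) := by ring
  have hR0 : (∫⁻ t in Set.Ioc (0 : ℝ) (x 0), ENNReal.ofReal (|g t - fstar t| ^ p)) ≤
      ENNReal.ofReal δ * c₀ := by
    calc (∫⁻ t in Set.Ioc (0 : ℝ) (x 0), ENNReal.ofReal (|g t - fstar t| ^ p)) ≤
        ∫⁻ _ in Set.Ioc (0 : ℝ) (x 0), c₀ := setLIntegral_mono measurable_const hb0
      _ = c₀ * volume (Set.Ioc (0 : ℝ) (x 0)) := setLIntegral_const _ _
      _ = c₀ * ENNReal.ofReal (x 0 - 0) := by rw [Real.volume_Ioc]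
      _ ≤ c₀ * ENNReal.ofReal δ := by
          gcongr
          linarith [hx0δ]
      _ = ENNReal.ofReal δ * c₀ := mul_comm _ _
  have hR1 : (∫⁻ t in Set.Ioc (x (n-1)) (1 : ℝ), ENNReal.ofReal (|g t - fstar t| ^ p)) ≤
      ENNReal.ofReal δ * c₁ := by
    calc (∫⁻ t in Set.Ioc (x (n-1)) (1:ℝ), ENNReal.ofReal (|g t - fstar t| ^ p)) ≤
        ∫⁻ _ in Set.Ioc (x (n-1)) (1:ℝ), c₁ := setLIntegral_mono measurable_const hb1
      _ = c₁ * volume (Set.Ioc (x (n-1)) (1:ℝ)) := setLIntegral_const _ _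
      _ = c₁ * ENNReal.ofReal (1 - x (n-1)) := by rw [Real.volume_Ioc]
      _ ≤ c₁ * ENNReal.ofReal δ := by
          gcongr
          linarith [hxnδ]
      _ = ENNReal.ofReal δ * c₁ := mul_comm _ _
  refine ⟨x, y, g, ⟨σ, hxy, hstrict⟩, hls, ?_⟩
  have term0 : ENNReal.ofReal δ * c₀ ≤
      ((if (ω i₀).1 < δ then 1 else 0) + (if 1 - δ < (ω i₀).1 then 1 else 0)) *
        ENNReal.ofReal δ * c₀ := by
    have h01 : (ω i₀).1 < δ := by rw [← hx0]; exact hx0δ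
    rw [if_pos h01]
    calc ENNReal.ofReal δ * c₀ = 1 * ENNReal.ofReal δ * c₀ := by rw [one_mul]
      _ ≤ _ := by gcongr; exact le_self_add
  have term1 : ENNReal.ofReal δ * c₁ ≤
      ((if (ω i₁).1 < δ then 1 else 0) + (if 1 - δ < (ω i₁).1 then 1 else 0)) *
        ENNReal.ofReal δ * c₁ := by
    have h11 : 1 - δ < (ω i₁).1 := by rw [← hxn]; exact hxnδ
    rw [if_pos h11]
    calc ENNReal.ofReal δ * c₁ = 1 * ENNReal.ofReal δ * c₁ := by rw [one_mul]
      _ ≤ _ := by gcongr; exact le_add_self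
  calc (∫⁻ t in Set.Ioc (0 : ℝ) (x 0), ENNReal.ofReal (|g t - fstar t| ^ p)) +
        (∫⁻ t in Set.Ioc (x (n - 1)) (1 : ℝ), ENNReal.ofReal (|g t - fstar t| ^ p)) ≤
      ENNReal.ofReal δ * c₀ + ENNReal.ofReal δ * c₁ := add_le_add hR0 hR1
    _ ≤ (((if (ω i₀).1 < δ then 1 else 0) + (if 1 - δ < (ω i₀).1 then 1 else 0)) *
          ENNReal.ofReal δ * c₀) +
        (((if (ω i₁).1 < δ then 1 else 0) + (if 1 - δ < (ω i₁).1 then 1 else 0)) *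
          ENNReal.ofReal δ * c₁) := add_le_add term0 term1
    _ = ∑ i ∈ ({i₀, i₁} : Finset (Fin n)),
          ((if (ω i).1 < δ then 1 else 0) + (if 1 - δ < (ω i).1 then 1 else 0)) *
            ENNReal.ofReal δ * ENNReal.ofReal ((|(ω i).2| + (K:ℝ)) ^ p) := by
        rw [Finset.sum_pair hne01]
    _ ≤ Zsum p δ K ω := by
        unfold Zsum Fterm
        exact Finset.sum_le_sum_of_subset (Finset.subset_univ _)
    _ ≤ γ' := h5


/-- **Lemma (vanishing endpoint risk of the linear spline).**
For `p ≥ 1`, Lipschitz `f*` and noise with finite `p`-th moment, the endpoint risks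
`R₀ = ∫₀^{x₁} |ĝ_S(t) − f*(t)|^p dt` and `Rₙ = ∫_{xₙ}^1 |ĝ_S(t) − f*(t)|^p dt` of the
linear-spline interpolator satisfy `R₀ + Rₙ ≤ γ` with probability tending to `1` as
`n → ∞`, for every `γ > 0`. -/
theorem spline_endpoint_risk_vanishes (p : ℝ) (hp : 1 ≤ p)
    (fstar : ℝ → ℝ) (K : ℝ≥0) (hK : LipschitzWith K fstar)
    (ν : Measure ℝ) [IsProbabilityMeasure ν]
    (hmom : (∫⁻ e, ENNReal.ofReal (|e| ^ p) ∂ν) ≠ ⊤)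
    (γ : ℝ) (hγ : 0 < γ) :
    Tendsto (fun n : ℕ => Pn ν n
        {ω | ∃ x y g, SortedVersion (sampleOf fstar ω) x y ∧ IsLinSpline n x y g ∧
          (∫⁻ t in Set.Ioc (0 : ℝ) (x 0), ENNReal.ofReal (|g t - fstar t| ^ p)) +
            (∫⁻ t in Set.Ioc (x (n - 1)) (1 : ℝ), ENNReal.ofReal (|g t - fstar t| ^ p)) ≤
          ENNReal.ofReal γ})
      atTop (nhds 1) := by
  classical
  set γ' := ENNReal.ofReal γ with hγ'
  have hγ0 : γ' ≠ 0 := by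
    rw [hγ', Ne, ENNReal.ofReal_eq_zero]
    linarith
  have hγt : γ' ≠ ⊤ := ENNReal.ofReal_ne_top
  set C := ∫⁻ e, ENNReal.ofReal ((|e| + (K:ℝ)) ^ p) ∂ν with hC
  have hCtop : C ≠ ⊤ := noise_moment_ne_top ν p hp K hmom
  have hfin : 2 * C / γ' ≠ ⊤ := by
    rw [div_eq_mul_inv]
    exact ENNReal.mul_ne_top (ENNReal.mul_ne_top (by norm_num) hCtop)
      (ENNReal.inv_ne_top.2 hγ0)
  set δf : ℕ → ℝ := fun n => (n:ℝ) ^ (-(3/4) : ℝ) with hδf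
  set bnd : ℕ → ℝ≥0∞ := fun n =>
    ((ENNReal.ofReal (1 - δf n))^n + (ENNReal.ofReal (1 - δf n))^n) +
      ENNReal.ofReal ((n:ℝ) ^ (-(1/2):ℝ)) * (2 * C / γ') with hbnd
  have hbnd0 : Tendsto bnd atTop (nhds 0) := by
    have h1 := tendsto_exp_tail
    have h2 : Tendsto (fun n : ℕ => ENNReal.ofReal ((n:ℝ)^(-(1/2):ℝ)) * (2*C/γ'))
        atTop (nhds 0) := by
      have := ENNReal.Tendsto.mul_const tendsto_half_tail (Or.inr hfin)
      simpa only [zero_mul] using this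
    have h3 := (h1.add h1).add h2
    rw [hbnd]
    simp only [hδf]
    simpa only [add_zero] using h3
  have hδsmall : Tendsto δf atTop (nhds 0) :=
    (tendsto_rpow_neg_atTop (by norm_num)).comp tendsto_natCast_atTop_atTop
  have hev : ∀ᶠ n : ℕ in atTop, 1 - bnd n ≤ Pn ν n
      {ω | ∃ x y g, SortedVersion (sampleOf fstar ω) x y ∧ IsLinSpline n x y g ∧
        (∫⁻ t in Set.Ioc (0 : ℝ) (x 0), ENNReal.ofReal (|g t - fstar t| ^ p)) +
          (∫⁻ t in Set.Ioc (x (n - 1)) (1 : ℝ), ENNReal.ofReal (|g t - fstar t| ^ p)) ≤ γ'} := by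
    filter_upwards [eventually_ge_atTop 1,
      hδsmall.eventually_lt_const (by norm_num : (0:ℝ) < 1/2)] with n hn hhalf
    have hn0 : (0:ℝ) < n := by exact_mod_cast hn
    have hδ0 : 0 < δf n := Real.rpow_pos_of_pos hn0 _
    have hδh : δf n ≤ 1/2 := le_of_lt hhalf
    have hδ1 : δf n ≤ 1 := by linarith
    set δ := δf n with hδ
    set A1 := {ω : Fin n → ℝ×ℝ | ∀ i j : Fin n, i ≠ j → (ω i).1 ≠ (ω j).1} with hA1
    set A2 := {ω : Fin n → ℝ×ℝ | ∀ i, (ω i).1 ∈ Set.Ioo (0:ℝ) 1} with hA2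
    set A3 := {ω : Fin n → ℝ×ℝ | ∃ i, (ω i).1 < δ} with hA3
    set A4 := {ω : Fin n → ℝ×ℝ | ∃ i, 1 - δ < (ω i).1} with hA4
    set A5 := {ω : Fin n → ℝ×ℝ | Zsum p δ K ω ≤ γ'} with hA5
    set E := A1 ∩ A2 ∩ A3 ∩ A4 ∩ A5 with hE
    have hincl : E ⊆ {ω | ∃ x y g, SortedVersion (sampleOf fstar ω) x y ∧ IsLinSpline n x y g ∧
        (∫⁻ t in Set.Ioc (0 : ℝ) (x 0), ENNReal.ofReal (|g t - fstar t| ^ p)) +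
          (∫⁻ t in Set.Ioc (x (n - 1)) (1 : ℝ), ENNReal.ofReal (|g t - fstar t| ^ p)) ≤ γ'} := by
      rintro ω ⟨⟨⟨⟨h1, h2⟩, h3⟩, h4⟩, h5⟩
      exact incl p hp fstar K hK δ hδ0 hδh γ' ω h1 h2 h3 h4 h5
    have hsub : Eᶜ ⊆ A1ᶜ ∪ A2ᶜ ∪ A3ᶜ ∪ A4ᶜ ∪ A5ᶜ := by
      rw [hE]
      intro ω hω
      simp only [Set.mem_compl_iff, Set.mem_inter_iff, not_and_or] at hω
      simp only [Set.mem_union, Set.mem_compl_iff]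
      tauto
    have hA1c : Pn ν n A1ᶜ = 0 := by
      have : A1ᶜ = {ω : Fin n → ℝ×ℝ | ¬ ∀ i j : Fin n, i ≠ j → (ω i).1 ≠ (ω j).1} := rfl
      rw [this, pn_distinct_null]
    have hA2c : Pn ν n A2ᶜ = 0 := by
      have : A2ᶜ = {ω : Fin n → ℝ×ℝ | ¬ ∀ i : Fin n, (ω i).1 ∈ Set.Ioo (0:ℝ) 1} := rfl
      rw [this, pn_ioo_null]
    have hA3c : Pn ν n A3ᶜ = (ENNReal.ofReal (1 - δ))^n := by
      have h : A3ᶜ = {ω : Fin n → ℝ×ℝ | ∀ i : Fin n, ¬ (ω i).1 < δ} := by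
        rw [hA3]
        ext ω
        simp [not_exists]
      rw [h, pn_tail_left ν δ (le_of_lt hδ0) hδ1]
    have hA4c : Pn ν n A4ᶜ = (ENNReal.ofReal (1 - δ))^n := by
      have h : A4ᶜ = {ω : Fin n → ℝ×ℝ | ∀ i : Fin n, ¬ 1 - δ < (ω i).1} := by
        rw [hA4]
        ext ω
        simp [not_exists]
      rw [h, pn_tail_right ν δ (le_of_lt hδ0) hδ1]
    have hA5c : Pn ν n A5ᶜ ≤ ENNReal.ofReal ((n:ℝ) ^ (-(1/2):ℝ)) * (2 * C / γ') := by
      have h : A5ᶜ = {ω : Fin n → ℝ×ℝ | ¬ Zsum p δ K ω ≤ γ'} := rfl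
      rw [h]
      refine le_trans (pn_Zsum_tail ν p δ K n (le_of_lt hδ0) hδ1 γ' hγ0 hγt) (le_of_eq ?_)
      have hmul : (n:ℝ≥0∞) * ENNReal.ofReal δ * ENNReal.ofReal δ =
          ENNReal.ofReal ((n:ℝ)^(-(1/2):ℝ)) := by
        rw [← ENNReal.ofReal_natCast n, ← ENNReal.ofReal_mul (Nat.cast_nonneg n),
          ← ENNReal.ofReal_mul (by positivity)]
        congr 1
        calc (n:ℝ) * δ * δ = (n:ℝ)^(1:ℝ) * (n:ℝ)^(-(3/4):ℝ) * (n:ℝ)^(-(3/4):ℝ) := by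
              rw [Real.rpow_one]
          _ = (n:ℝ)^((1:ℝ) + -(3/4) + -(3/4)) := by
              rw [← Real.rpow_add hn0, ← Real.rpow_add hn0]
          _ = (n:ℝ)^(-(1/2):ℝ) := by norm_num
      rw [div_eq_mul_inv, div_eq_mul_inv]
      have hring : (↑n * (2 * ENNReal.ofReal δ * ENNReal.ofReal δ * C)) * γ'⁻¹ =
          (↑n * ENNReal.ofReal δ * ENNReal.ofReal δ) * (2 * C * γ'⁻¹) := by ring
      rw [hring, hmul]
      norm_num [div_eq_mul_inv]
    have hcompl : Pn ν n Eᶜ ≤ bnd n := by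
      have step : Pn ν n Eᶜ ≤
          Pn ν n (A1ᶜ) + Pn ν n (A2ᶜ) + Pn ν n (A3ᶜ) + Pn ν n (A4ᶜ) + Pn ν n (A5ᶜ) := by
        refine le_trans (measure_mono hsub) ?_
        refine le_trans (measure_union_le _ _) (add_le_add ?_ le_rfl)
        refine le_trans (measure_union_le _ _) (add_le_add ?_ le_rfl)
        refine le_trans (measure_union_le _ _) (add_le_add ?_ le_rfl)
        exact measure_union_le _ _
      rw [hA1c, hA2c, hA3c, hA4c] at step
      simp only [zero_add, add_zero] at step
      refine le_trans step ?_
      rw [hbnd]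
      exact add_le_add le_rfl hA5c
    have h2' : (1:ℝ≥0∞) - Pn ν n Eᶜ ≤ Pn ν n E := by
      rw [tsub_le_iff_right]
      calc (1:ℝ≥0∞) = Pn ν n (E ∪ Eᶜ) := by
            rw [Set.union_compl_self]
            exact measure_univ.symm
        _ ≤ Pn ν n E + Pn ν n Eᶜ := measure_union_le _ _
    calc (1:ℝ≥0∞) - bnd n ≤ 1 - Pn ν n Eᶜ := tsub_le_tsub_left hcompl 1
      _ ≤ Pn ν n E := h2'
      _ ≤ _ := measure_mono hincl
  have hl : Tendsto (fun n => 1 - bnd n) atTop (nhds 1) := by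
    have := ENNReal.Tendsto.sub
      (tendsto_const_nhds : Tendsto (fun _ : ℕ => (1:ℝ≥0∞)) atTop (nhds 1))
      hbnd0 (Or.inl ENNReal.one_ne_top)
    simpa using this
  have hup : ∀ᶠ n : ℕ in atTop, Pn ν n
      {ω | ∃ x y g, SortedVersion (sampleOf fstar ω) x y ∧ IsLinSpline n x y g ∧
        (∫⁻ t in Set.Ioc (0 : ℝ) (x 0), ENNReal.ofReal (|g t - fstar t| ^ p)) +
          (∫⁻ t in Set.Ioc (x (n - 1)) (1 : ℝ), ENNReal.ofReal (|g t - fstar t| ^ p)) ≤ γ'} ≤ 1 :=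
    Eventually.of_forall (fun n => prob_le_one)
  exact tendsto_of_tendsto_of_tendsto_of_le_of_le' hl tendsto_const_nhds hev hup


end
end

section
/- Let a, b, L > 0 and consider the function m(t) := min{ 1 + (2/a)·t, 1 + (2/b)·(L − t) } on [0, L]. Then: (i) for every p with 1 ≤ p < 2, ∫₀^L m(t)^p dt ≥ (2^p/(p+1)) · L^{p+1}/(a+b)^p ≥ L^{p+1}/(a+b)^p; and (ii) for every p ≥ 2, ∫₀^L m(t)^p dt ≥ (4/3) · L³/(a+b)² ≥ L³/(a+b)². -/
open MeasureTheory

private lemma cont_rpow {p : ℝ} (hp : 0 ≤ p) : Continuous fun x : ℝ => x ^ p := by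
  rw [continuous_iff_continuousAt]
  exact fun x => Real.continuousAt_rpow_const x p (Or.inr hp)

set_option maxHeartbeats 1000000 in
private lemma spike_key (a b L : ℝ) (ha : 0 < a) (hb : 0 < b) (hL : 0 < L)
    (p : ℝ) (hp : 1 ≤ p) :
    2 ^ p / (p + 1) * (L ^ (p + 1) / (a + b) ^ p) ≤
      ∫ t in Set.Icc (0 : ℝ) L, (min (1 + 2 / a * t) (1 + 2 / b * (L - t))) ^ p := by
  have hp0 : (0:ℝ) ≤ p := by linarith
  have hab : 0 < a + b := by linarith
  set c : ℝ := a * L / (a + b) with hc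
  have hc0 : 0 ≤ c := by positivity
  have hcL : c ≤ L := by
    rw [hc, div_le_iff₀ hab]; nlinarith
  set m : ℝ → ℝ := fun t => (min (1 + 2 / a * t) (1 + 2 / b * (L - t))) ^ p with hm
  have hmc : Continuous m := by
    apply (Continuous.min (by continuity) (by continuity)).rpow_const
    intro t; right; exact hp0
  -- rewrite as interval integral
  have hIcc : (∫ t in Set.Icc (0 : ℝ) L, m t) = ∫ t in (0:ℝ)..L, m t := by
    rw [MeasureTheory.integral_Icc_eq_integral_Ioc, intervalIntegral.integral_of_le hL.le]
  -- integrability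
  have hmint : ∀ x y : ℝ, IntervalIntegrable m volume x y :=
    fun x y => hmc.intervalIntegrable x y
  have hgint : ∀ (d : ℝ) (x y : ℝ), IntervalIntegrable (fun t => (d * t) ^ p) volume x y :=
    fun d x y => ((cont_rpow hp0).comp (by continuity)).intervalIntegrable x y
  -- split
  have hsplit : (∫ t in (0:ℝ)..L, m t) = (∫ t in (0:ℝ)..c, m t) + ∫ t in c..L, m t := by
    rw [intervalIntegral.integral_add_adjacent_intervals (hmint 0 c) (hmint c L)]
  -- left bound
  have hleft : (∫ t in (0:ℝ)..c, (2 / a * t) ^ p) ≤ ∫ t in (0:ℝ)..c, m t := by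
    apply intervalIntegral.integral_mono_on hc0 (hgint _ _ _) (hmint _ _)
    intro t ht
    obtain ⟨ht0, htc⟩ := ht
    apply Real.rpow_le_rpow (by positivity) _ hp0
    apply le_min
    · nlinarith
    · have h1 : 2 / a * t ≤ 2 * L / (a + b) := by
        rw [div_mul_eq_mul_div, div_le_div_iff₀ ha hab]
        have : t * (a + b) ≤ c * (a + b) := by nlinarith
        rw [hc, div_mul_cancel₀ _ (ne_of_gt hab)] at this
        nlinarith
      have hLc : (L - c) * (a + b) = b * L := by
        rw [hc]; field_simp; ring
      have h2 : 2 * L / (a + b) ≤ 2 / b * (L - t) := by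
        rw [div_mul_eq_mul_div, div_le_div_iff₀ hab hb]
        nlinarith
      linarith
  -- right bound
  have hright : (∫ t in c..L, (2 / b * (L - t)) ^ p) ≤ ∫ t in c..L, m t := by
    apply intervalIntegral.integral_mono_on hcL
      (((cont_rpow hp0).comp (by continuity)).intervalIntegrable c L) (hmint _ _)
    intro t ht
    obtain ⟨htc, htL⟩ := ht
    apply Real.rpow_le_rpow (mul_nonneg (by positivity) (by linarith)) _ hp0
    apply le_min
    · have h1 : 2 / b * (L - t) ≤ 2 * L / (a + b) := by
        rw [div_mul_eq_mul_div, div_le_div_iff₀ hb hab]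
        have hLc : (L - c) * (a + b) = b * L := by rw [hc, sub_mul, div_mul_cancel₀ _ hab.ne']; ring
        nlinarith
      have h2 : 2 * L / (a + b) ≤ 2 / a * t := by
        rw [div_mul_eq_mul_div, div_le_div_iff₀ hab ha]
        have hca : c * (a + b) = a * L := by rw [hc, div_mul_cancel₀ _ hab.ne']
        nlinarith
      linarith
    · nlinarith [div_nonneg (by norm_num : (0:ℝ) ≤ 2) hb.le,
        mul_nonneg (div_nonneg (by norm_num : (0:ℝ) ≤ 2) hb.le) (sub_nonneg.mpr htL)]
  -- value of the model integrals
  have hval : ∀ d T : ℝ, 0 ≤ d → 0 ≤ T →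
      (∫ t in (0:ℝ)..T, (d * t) ^ p) = d ^ p * T ^ (p + 1) / (p + 1) := by
    intro d T hd hT
    have : (∫ t in (0:ℝ)..T, (d * t) ^ p) = ∫ t in (0:ℝ)..T, d ^ p * t ^ p := by
      apply intervalIntegral.integral_congr
      intro t ht
      rw [Set.uIcc_of_le hT] at ht
      exact Real.mul_rpow hd ht.1
    rw [this, intervalIntegral.integral_const_mul, integral_rpow (Or.inl (by linarith)),
      Real.zero_rpow (by linarith), sub_zero, mul_div_assoc]
  -- change of variables on the right piece
  have hcv : (∫ t in c..L, (2 / b * (L - t)) ^ p) =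
      ∫ u in (0:ℝ)..(L - c), (2 / b * u) ^ p := by
    have := intervalIntegral.integral_comp_sub_left (a := c) (b := L)
      (fun u => (2 / b * u) ^ p) L
    simpa using this
  -- put everything together
  have hsum : (2 / a) ^ p * c ^ (p + 1) / (p + 1) + (2 / b) ^ p * (L - c) ^ (p + 1) / (p + 1) ≤
      ∫ t in (0:ℝ)..L, m t := by
    rw [hsplit, ← hval (2 / a) c (by positivity) hc0,
      ← hval (2 / b) (L - c) (by positivity) (by linarith)]
    rw [← hcv]
    exact add_le_add hleft hright
  rw [hIcc]
  refine le_trans (le_of_eq ?_) hsum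
  have e1 : c ^ (p + 1) = a ^ p * a * L ^ (p + 1) / ((a + b) ^ p * (a + b)) := by
    rw [hc, Real.div_rpow (by positivity) hab.le, Real.mul_rpow ha.le hL.le,
      Real.rpow_add_one ha.ne', Real.rpow_add_one hab.ne']
  have e2 : (L - c) ^ (p + 1) = b ^ p * b * L ^ (p + 1) / ((a + b) ^ p * (a + b)) := by
    have hLc : L - c = b * L / (a + b) := by
      rw [hc, eq_div_iff hab.ne', sub_mul, div_mul_cancel₀ _ hab.ne']; ring
    rw [hLc, Real.div_rpow (by positivity) hab.le, Real.mul_rpow hb.le hL.le,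
      Real.rpow_add_one hb.ne', Real.rpow_add_one hab.ne']
  have e3 : (2 / a) ^ p = 2 ^ p / a ^ p := Real.div_rpow (by norm_num) ha.le p
  have e4 : (2 / b) ^ p = 2 ^ p / b ^ p := Real.div_rpow (by norm_num) hb.le p
  rw [e1, e2, e3, e4]
  have hA : (0:ℝ) < a ^ p := Real.rpow_pos_of_pos ha p
  have hB : (0:ℝ) < b ^ p := Real.rpow_pos_of_pos hb p
  have hS : (0:ℝ) < (a + b) ^ p := Real.rpow_pos_of_pos hab p
  have hp1 : (0:ℝ) < p + 1 := by linarith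
  field_simp

/-- **Claim (deterministic lower bound on the `L_p` mass of a spike).**
For `a, b, L > 0` let `m(t) = min (1 + (2/a)·t) (1 + (2/b)·(L − t))` on `[0, L]`.  Then
(i) for every `1 ≤ p < 2`,
`∫₀^L m(t)^p dt ≥ (2^p/(p+1)) · L^{p+1}/(a+b)^p ≥ L^{p+1}/(a+b)^p`, and
(ii) for every `p ≥ 2`, `∫₀^L m(t)^p dt ≥ (4/3) · L³/(a+b)² ≥ L³/(a+b)²`. -/
theorem spike_integral_lower_bound (a b L : ℝ) (ha : 0 < a) (hb : 0 < b) (hL : 0 < L) :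
    (∀ p : ℝ, 1 ≤ p → p < 2 →
      L ^ (p + 1) / (a + b) ^ p ≤ 2 ^ p / (p + 1) * (L ^ (p + 1) / (a + b) ^ p) ∧
      2 ^ p / (p + 1) * (L ^ (p + 1) / (a + b) ^ p) ≤
        ∫ t in Set.Icc (0 : ℝ) L, (min (1 + 2 / a * t) (1 + 2 / b * (L - t))) ^ p) ∧
    (∀ p : ℝ, 2 ≤ p →
      L ^ (3 : ℕ) / (a + b) ^ (2 : ℕ) ≤ 4 / 3 * (L ^ (3 : ℕ) / (a + b) ^ (2 : ℕ)) ∧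
      4 / 3 * (L ^ (3 : ℕ) / (a + b) ^ (2 : ℕ)) ≤
        ∫ t in Set.Icc (0 : ℝ) L, (min (1 + 2 / a * t) (1 + 2 / b * (L - t))) ^ p) := by
  have hab : 0 < a + b := by linarith
  constructor
  · intro p hp hp2
    have hp1 : (0:ℝ) < p + 1 := by linarith
    have h2p : p + 1 ≤ 2 ^ p := by
      have ha1 : (2:ℝ) ^ p = 2 ^ (p - 1) * 2 := by
        rw [← Real.rpow_add_one (by norm_num : (2:ℝ) ≠ 0) (p - 1)]
        norm_num
      have ha2 : (2:ℝ) ^ (p - 1) = Real.exp (Real.log 2 * (p - 1)) :=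
        Real.rpow_def_of_pos (by norm_num) _
      have ha3 := Real.add_one_le_exp (Real.log 2 * (p - 1))
      have hlog : (1:ℝ)/2 ≤ Real.log 2 := by
        have := Real.log_two_gt_d9; norm_num at this ⊢; linarith
      nlinarith
    have hpos : (0:ℝ) ≤ L ^ (p + 1) / (a + b) ^ p := by positivity
    refine ⟨le_mul_of_one_le_left hpos ((one_le_div hp1).mpr h2p), ?_⟩
    exact spike_key a b L ha hb hL p hp
  · intro p hp
    set m : ℝ → ℝ := fun t => min (1 + 2 / a * t) (1 + 2 / b * (L - t)) with hmdef
    have hmc : Continuous m := Continuous.min (by continuity) (by continuity)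
    have step : (∫ t in Set.Icc (0 : ℝ) L, (m t) ^ (2:ℝ)) ≤
        ∫ t in Set.Icc (0 : ℝ) L, (m t) ^ p := by
      apply MeasureTheory.setIntegral_mono_on
      · exact (hmc.rpow_const (fun t => Or.inr (by norm_num))).integrableOn_Icc
      · exact (hmc.rpow_const (fun t => Or.inr (by linarith))).integrableOn_Icc
      · exact measurableSet_Icc
      · intro t ht
        apply Real.rpow_le_rpow_of_exponent_le _ hp
        have h1 : (0:ℝ) ≤ 2 / a * t := by
          exact mul_nonneg (by positivity) ht.1
        have h2 : (0:ℝ) ≤ 2 / b * (L - t) := by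
          exact mul_nonneg (by positivity) (by linarith [ht.2])
        simp only [hmdef, le_min_iff]
        constructor <;> linarith
    have hkey := spike_key a b L ha hb hL 2 (by norm_num)
    have e1 : (2:ℝ) ^ (2:ℝ) = 4 := by
      rw [show ((2:ℝ):ℝ) = ((2:ℕ):ℝ) by norm_num, Real.rpow_natCast]; norm_num
    have e2 : L ^ ((2:ℝ) + 1) = L ^ (3:ℕ) := by
      rw [show ((2:ℝ) + 1) = ((3:ℕ):ℝ) by norm_num, Real.rpow_natCast]
    have e3 : (a + b) ^ (2:ℝ) = (a + b) ^ (2:ℕ) := by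
      rw [show ((2:ℝ):ℝ) = ((2:ℕ):ℝ) by norm_num, Real.rpow_natCast]
    rw [e1, e2, e3] at hkey
    refine ⟨le_mul_of_one_le_left (by positivity) (by norm_num), ?_⟩
    calc 4 / 3 * (L ^ (3:ℕ) / (a + b) ^ (2:ℕ))
        = 4 / (2 + 1) * (L ^ (3:ℕ) / (a + b) ^ (2:ℕ)) := by norm_num
      _ ≤ ∫ t in Set.Icc (0:ℝ) L, (m t) ^ (2:ℝ) := hkey
      _ ≤ _ := step
end
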